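/- arXiv:2211.06638 — 11 statements merged into one kernel-verified Lean document; each statement's English description precedes it below -/
import Mathlib

section
/- Let K be a field of characteristic ≠ 2, let A and B be commutative associative unital K-algebras with B finite-dimensional over K, and let [·,·] be an anticommutative bracket on the tensor product algebra A ⊗ B satisfying identity (★). Then there exist a finite index set I and brackets f_i on A and g_i on B (i ∈ I) such that: (1) [a⊗b, a'⊗b'] = Σ_{i∈I} f_i(a,a') ⊗ g_i(b,b') for all a,a' ∈ A, b,b' ∈ B; (2) every f_i satisfies identity (★) on A and every g_i satisfies identity (★) on B; (3) for each i ∈ I, either f_i is anticommutative and g_i is symmetric, or f_i is symmetric and g_i is anticommutative; and (4) Σ_{i∈I} (f_i(a,a'')a' − f_i(a',a'')a) ⊗ (g_i(b,b'')b' − g_i(b',b'')b) = 0 for all a,a',a'' ∈ A and b,b',b'' ∈ B. -/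
/-!
Put `u = a ⊗ 1`, `v = 1 ⊗ b`. Identity (★) and its mirror image in the second argument (which
follows by anticommutativity), together with `[1, 1] = 0`, expand `[a ⊗ b, a' ⊗ b'] = [uv, u'v']`
into eight terms built from the three restrictions `[a ⊗ 1, a' ⊗ 1]`, `[a ⊗ 1, 1 ⊗ b]` and
`[1 ⊗ b, 1 ⊗ b']`. Slicing such a restriction with a functional `φ` on `A` yields an object on `B`
of a fixed kind (an element of `B`, a first-order operator, an antisymmetric (★)-bracket); these
form a finite-dimensional space, so the restriction is a finite sum `∑ⱼ κⱼ ⊗ mⱼ` over a basis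
`(mⱼ)` of it, and linear independence of the `mⱼ` transfers (★) to the coefficients `κⱼ`.
Each of the eight terms is then a sum of products `f ⊗ g` of opposite parities, once
`f ⊗ g - fᵗ ⊗ gᵗ` is split into its symmetric and antisymmetric parts (this needs `2 ≠ 0`).
Identity (4) holds for every such decomposition: `(a ⊗ b)(a' ⊗ b') = (a ⊗ b')(a' ⊗ b)`, and (★)
expands the bracket of this product in two ways.
-/

open scoped TensorProduct
open TensorProduct

section Slice

variable {K A U : Type*} [Field K] [AddCommGroup A] [Module K A] [AddCommGroup U] [Module K U]

noncomputable def sliceLeft (φ : Module.Dual K A) : A ⊗[K] U →ₗ[K] U :=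
  TensorProduct.lid K U ∘ₗ φ.rTensor U

@[simp] lemma sliceLeft_tmul (φ : Module.Dual K A) (a : A) (u : U) :
    sliceLeft φ (a ⊗ₜ[K] u) = φ a • u := by
  simp [sliceLeft]

lemma eq_zero_of_forall_sliceLeft_eq_zero {z : A ⊗[K] U}
    (h : ∀ φ : Module.Dual K A, sliceLeft φ z = 0) : z = 0 := by
  classical
  let b := Module.Free.chooseBasis K A
  apply (equivFinsuppOfBasisLeft b).injective
  ext i
  simpa [equivFinsuppOfBasisLeft_apply, sliceLeft] using h (b.coord i)

lemma eq_of_forall_dual_sum_smul_eq {n : ℕ} {m : Fin n → U} (hm : LinearIndependent K m)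
    {c c' : Fin n → A} (h : ∀ φ : Module.Dual K A, ∑ j, φ (c j) • m j = ∑ j, φ (c' j) • m j) :
    c = c' := by
  funext j
  rw [← sub_eq_zero, ← Module.forall_dual_apply_eq_zero_iff K]
  intro φ
  have hφ : ∑ j, (φ (c j) - φ (c' j)) • m j = 0 := by
    simp [sub_smul, Finset.sum_sub_distrib, h φ]
  simpa [sub_eq_zero] using Fintype.linearIndependent_iff.mp hm _ hφ j

lemma eq_of_sum_tmul_eq {n : ℕ} {m : Fin n → U} (hm : LinearIndependent K m) {c c' : Fin n → A}
    (h : ∑ j, c j ⊗ₜ[K] m j = ∑ j, c' j ⊗ₜ[K] m j) : c = c' :=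
  eq_of_forall_dual_sum_smul_eq hm fun φ => by simpa using congrArg (sliceLeft φ) h

lemma exists_sum_tmul_of_forall_sliceLeft_mem (M : Submodule K U) [FiniteDimensional K M] :
    ∃ (n : ℕ) (κ : Fin n → A ⊗[K] U →ₗ[K] A) (m : Fin n → U),
      LinearIndependent K m ∧ (∀ j, m j ∈ M) ∧
      ∀ τ : A ⊗[K] U, (∀ φ : Module.Dual K A, sliceLeft φ τ ∈ M) →
        τ = ∑ j, κ j τ ⊗ₜ[K] m j := by
  obtain ⟨N, hMN⟩ := Submodule.exists_isCompl M
  let π := M.projectionOnto N hMN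
  let b := Module.finBasis K M
  refine ⟨_, fun j => TensorProduct.rid K A ∘ₗ (b.coord j ∘ₗ π).lTensor A, fun j => b j,
    b.linearIndependent.map' M.subtype M.ker_subtype, fun j => (b j).2, fun τ hτ => ?_⟩
  have hcoord : ∀ (φ : Module.Dual K A) (ψ : Module.Dual K U) (z : A ⊗[K] U),
      φ (TensorProduct.rid K A (ψ.lTensor A z)) = ψ (sliceLeft φ z) := by
    intro φ ψ z
    induction z using TensorProduct.induction_on <;> simp_all [mul_comm]
  -- the slices agree: `φ (κ j τ)` is the `j`-th coordinate of `π (sliceLeft φ τ) = sliceLeft φ τ`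
  rw [← sub_eq_zero]
  refine eq_zero_of_forall_sliceLeft_eq_zero fun φ => ?_
  have hπ : (π (sliceLeft φ τ) : U) = sliceLeft φ τ :=
    congrArg Subtype.val (Submodule.projectionOnto_apply_left hMN ⟨_, hτ φ⟩)
  simp only [map_sub, map_sum, sliceLeft_tmul, LinearMap.comp_apply, LinearEquiv.coe_coe, hcoord,
    Module.Basis.coord_apply]
  rw [sub_eq_zero]
  conv_lhs => rw [← hπ, ← b.sum_repr (π (sliceLeft φ τ))]
  simp only [Submodule.coe_sum, Submodule.coe_smul]

variable {V W : Type*} [AddCommGroup V] [Module K V] [AddCommGroup W] [Module K W]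

lemma exists_sum_tmul_apply_of_forall_sliceLeft_comp_mem [FiniteDimensional K V]
    (M : Submodule K (V →ₗ[K] W)) [FiniteDimensional K M] :
    ∃ (n : ℕ) (κ : Fin n → (V →ₗ[K] A ⊗[K] W) →ₗ[K] A) (m : Fin n → V →ₗ[K] W),
      LinearIndependent K m ∧ (∀ j, m j ∈ M) ∧
      ∀ Ψ : V →ₗ[K] A ⊗[K] W, (∀ φ : Module.Dual K A, sliceLeft φ ∘ₗ Ψ ∈ M) →
        ∀ v, Ψ v = ∑ j, κ j Ψ ⊗ₜ[K] m j v := by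
  let e := lTensorHomEquivHomLTensor K V A W
  obtain ⟨n, κ, m, hm, hmM, hκ⟩ := exists_sum_tmul_of_forall_sliceLeft_mem (A := A) M
  have hslice : ∀ (φ : Module.Dual K A) τ, sliceLeft φ τ = sliceLeft φ ∘ₗ e τ := by
    intro φ τ
    induction τ using TensorProduct.induction_on with
    | zero => ext; simp
    | tmul a f => ext; simp [e, lTensorHomToHomLTensor_apply]
    | add x y hx hy => ext; simp_all
  refine ⟨n, fun j => κ j ∘ₗ e.symm.toLinearMap, m, hm, hmM, fun Ψ hΨ v => ?_⟩
  have hΨ' := hκ (e.symm Ψ) fun φ => by rw [hslice, e.apply_symm_apply]; exact hΨ φ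
  conv_lhs => rw [← e.apply_symm_apply Ψ, hΨ']
  simp [e, lTensorHomToHomLTensor_apply]

lemma eq_of_sum_tmul_apply_eq {n : ℕ} {m : Fin n → V →ₗ[K] W} (hm : LinearIndependent K m)
    {c c' : Fin n → A} (h : ∀ v, ∑ j, c j ⊗ₜ[K] m j v = ∑ j, c' j ⊗ₜ[K] m j v) : c = c' :=
  eq_of_forall_dual_sum_smul_eq hm fun φ => LinearMap.ext fun v => by
    simpa using congrArg (sliceLeft φ) (h v)

end Slice

section Brackets

variable (K R : Type*) [Field K] [CommRing R] [Algebra K R]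

/-- Differential operators of order at most one: the maps `x ↦ D x + c * x` with `D` a
derivation. -/
def firstOrderOps : Submodule K (R →ₗ[K] R) where
  carrier := {d | ∀ x y, d (x * y) = d x * y + d y * x - d 1 * (x * y)}
  add_mem' {d d'} hd hd' x y := by
    simp only [LinearMap.add_apply, hd x y, hd' x y]
    ring
  zero_mem' x y := by simp
  smul_mem' c d hd x y := by
    simp only [LinearMap.smul_apply, hd x y, smul_sub, smul_add, smul_mul_assoc]

def starBrackets : Submodule K (R →ₗ[K] R →ₗ[K] R) where
  carrier := {f | ∀ a b c, f (a * b) c = f a c * b + f b c * a - f 1 c * (a * b)}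
  add_mem' {f f'} hf hf' a b c := by
    simp only [LinearMap.add_apply, hf a b c, hf' a b c]
    ring
  zero_mem' a b c := by simp
  smul_mem' r f hf a b c := by
    simp only [LinearMap.smul_apply, hf a b c, smul_sub, smul_add, smul_mul_assoc]

def antisymmStarBrackets : Submodule K (R →ₗ[K] R →ₗ[K] R) where
  carrier := {f | f ∈ starBrackets K R ∧ ∀ x y, f x y = -f y x}
  add_mem' {f f'} hf hf' :=
    ⟨add_mem hf.1 hf'.1, fun x y => by simp only [LinearMap.add_apply, hf.2 x y, hf'.2 x y]; abel⟩
  zero_mem' := ⟨zero_mem _, fun x y => by simp⟩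
  smul_mem' r f hf := ⟨Submodule.smul_mem _ r hf.1, fun x y => by simp [hf.2 x y]⟩

variable {K R}

lemma mulLeft_mem_firstOrderOps (c : R) : LinearMap.mulLeft K c ∈ firstOrderOps K R := by
  intro x y
  simp only [LinearMap.mulLeft_apply, mul_one]
  ring

lemma mul_comp_mem_starBrackets {d : R →ₗ[K] R} (hd : d ∈ firstOrderOps K R) :
    LinearMap.mul K R ∘ₗ d ∈ starBrackets K R := by
  intro a b c
  simp only [LinearMap.comp_apply, LinearMap.mul_apply', hd a b]
  ring

lemma flip_apply_mem_firstOrderOps {f : R →ₗ[K] R →ₗ[K] R} (hf : f ∈ starBrackets K R) (c : R) :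
    f.flip c ∈ firstOrderOps K R :=
  fun x y => hf x y c

-- `sub_mem` does not apply: for a `K`-algebra `R`, instance search finds no `AddSubgroupClass`
-- for submodules of `R →ₗ[K] R →ₗ[K] R`.
lemma sub_mem_starBrackets {f g : R →ₗ[K] R →ₗ[K] R} (hf : f ∈ starBrackets K R)
    (hg : g ∈ starBrackets K R) : f - g ∈ starBrackets K R := by
  intro a b c
  simp only [LinearMap.sub_apply, hf a b c, hg a b c]
  ring

lemma flip_mul_comp_mem_starBrackets (d : R →ₗ[K] R) :
    (LinearMap.mul K R ∘ₗ d).flip ∈ starBrackets K R := by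
  intro a b c
  simp only [LinearMap.flip_apply, LinearMap.comp_apply, LinearMap.mul_apply']
  ring

end Brackets

section Decomposable

variable {K A B : Type*} [Field K] [CommRing A] [Algebra K A] [CommRing B] [Algebra K B]

def IsStarPair (f : A →ₗ[K] A →ₗ[K] A) (g : B →ₗ[K] B →ₗ[K] B) : Prop :=
  f ∈ starBrackets K A ∧ g ∈ starBrackets K B ∧
    (((∀ a a', f a a' = -f a' a) ∧ ∀ b b', g b b' = g b' b) ∨
      ((∀ a a', f a a' = f a' a) ∧ ∀ b b', g b b' = -g b' b))

def IsStarDecomposable (Φ : A → A → B → B → A ⊗[K] B) : Prop :=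
  ∃ (n : ℕ) (f : Fin n → A →ₗ[K] A →ₗ[K] A) (g : Fin n → B →ₗ[K] B →ₗ[K] B),
    (∀ a a' b b', Φ a a' b b' = ∑ i, f i a a' ⊗ₜ[K] g i b b') ∧ ∀ i, IsStarPair (f i) (g i)

lemma IsStarPair.isStarDecomposable {f : A →ₗ[K] A →ₗ[K] A} {g : B →ₗ[K] B →ₗ[K] B}
    (h : IsStarPair f g) : IsStarDecomposable fun a a' b b' => f a a' ⊗ₜ[K] g b b' :=
  ⟨1, fun _ => f, fun _ => g, by simp, fun _ => h⟩

namespace IsStarDecomposable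

variable {Φ Ψ : A → A → B → B → A ⊗[K] B}

lemma zero : IsStarDecomposable (0 : A → A → B → B → A ⊗[K] B) :=
  ⟨0, finZeroElim, finZeroElim, by simp, finZeroElim⟩

lemma add (hΦ : IsStarDecomposable Φ) (hΨ : IsStarDecomposable Ψ) :
    IsStarDecomposable (Φ + Ψ) := by
  obtain ⟨m, f, g, hfg, hpair⟩ := hΦ
  obtain ⟨n, f', g', hfg', hpair'⟩ := hΨ
  refine ⟨m + n, Fin.append f f', Fin.append g g', fun a a' b b' => ?_,
    Fin.addCases (by simpa using hpair) (by simpa using hpair')⟩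
  simp [Fin.sum_univ_add, hfg, hfg']

lemma sum {ι : Type*} (s : Finset ι) {Φ : ι → A → A → B → B → A ⊗[K] B}
    (h : ∀ i ∈ s, IsStarDecomposable (Φ i)) : IsStarDecomposable (∑ i ∈ s, Φ i) :=
  Finset.sum_induction _ _ (fun _ _ => add) zero h

lemma of_eq (hΦ : IsStarDecomposable Φ) (h : ∀ a a' b b', Ψ a a' b b' = Φ a a' b b') :
    IsStarDecomposable Ψ := by
  obtain rfl : Ψ = Φ := by funext a a' b b'; exact h a a' b b'
  exact hΦ

end IsStarDecomposable

lemma isStarDecomposable_sub_flip (h2 : (2 : K) ≠ 0) {f : A →ₗ[K] A →ₗ[K] A}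
    {g : B →ₗ[K] B →ₗ[K] B} (hf : f ∈ starBrackets K A) (hf' : f.flip ∈ starBrackets K A)
    (hg : g ∈ starBrackets K B) (hg' : g.flip ∈ starBrackets K B) :
    IsStarDecomposable fun a a' b b' => f a a' ⊗ₜ[K] g b b' - f a' a ⊗ₜ[K] g b' b := by
  have hplus : IsStarPair ((2 : K)⁻¹ • (f + f.flip)) (g - g.flip) :=
    ⟨Submodule.smul_mem _ _ (add_mem hf hf'), sub_mem_starBrackets hg hg',
      Or.inr ⟨fun a a' => by simp [add_comm], fun b b' => by simp⟩⟩
  have hminus : IsStarPair ((2 : K)⁻¹ • (f - f.flip)) (g + g.flip) :=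
    ⟨Submodule.smul_mem _ _ (sub_mem_starBrackets hf hf'), add_mem hg hg',
      Or.inl ⟨fun a a' => by simp [← smul_neg], fun b b' => by simp [add_comm]⟩⟩
  refine (hplus.isStarDecomposable.add hminus.isStarDecomposable).of_eq fun a a' b b' => ?_
  simp only [Pi.add_apply, LinearMap.smul_apply, LinearMap.add_apply, LinearMap.sub_apply,
    LinearMap.flip_apply, ← smul_tmul', add_tmul, sub_tmul, tmul_add, tmul_sub]
  match_scalars <;> field_simp <;> ring

end Decomposable

section RingBracket

variable {R : Type*} [CommRing R] {L : R → R → R}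

lemma bracket_mul_right (hanti : ∀ z w, L z w = -L w z)
    (hstar : ∀ z w v, L (z * w) v = L z v * w + L w v * z - L 1 v * (z * w)) (v z w : R) :
    L v (z * w) = L v z * w + L v w * z - L v 1 * (z * w) := by
  rw [hanti v, hstar, hanti z, hanti w, hanti 1]
  ring

lemma bracket_mul_mul (hanti : ∀ z w, L z w = -L w z)
    (hstar : ∀ z w v, L (z * w) v = L z v * w + L w v * z - L 1 v * (z * w)) (h11 : L 1 1 = 0)
    (u v u' v' : R) :
    L (u * v) (u' * v') = L u u' * (v * v') + L u v' * (u' * v) - L u' v * (u * v')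
      - L u 1 * (u' * (v * v')) + L u' 1 * (u * (v * v')) + L v v' * (u * u')
      - L v 1 * (u * u' * v') - L 1 v' * (u * u' * v) := by
  rw [hstar, bracket_mul_right hanti hstar u, bracket_mul_right hanti hstar v,
    bracket_mul_right hanti hstar 1, h11, hanti v u', hanti 1 u']
  ring

end RingBracket

section TensorBracket

open Algebra.TensorProduct

variable {K A B : Type*} [Field K] [CommRing A] [Algebra K A] [CommRing B] [Algebra K B]
  {L : A ⊗[K] B →ₗ[K] A ⊗[K] B →ₗ[K] A ⊗[K] B}

lemma sliceLeft_mul_one_tmul (φ : Module.Dual K A) (z : A ⊗[K] B) (b : B) :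
    sliceLeft φ (z * (1 ⊗ₜ b)) = sliceLeft φ z * b := by
  induction z using TensorProduct.induction_on with
  | zero => simp
  | tmul x y => simp
  | add x y hx hy => simp [add_mul, hx, hy]

theorem sum_sub_tmul_sub_eq_zero
    (hstar : ∀ z w v, L (z * w) v = L z v * w + L w v * z - L 1 v * (z * w))
    {n : ℕ} {f : Fin n → A →ₗ[K] A →ₗ[K] A} {g : Fin n → B →ₗ[K] B →ₗ[K] B}
    (hL : ∀ a a' b b', L (a ⊗ₜ b) (a' ⊗ₜ b') = ∑ i, f i a a' ⊗ₜ[K] g i b b')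
    (a a' a'' : A) (b b' b'' : B) :
    ∑ i, (f i a a'' * a' - f i a' a'' * a) ⊗ₜ[K] (g i b b'' * b' - g i b' b'' * b) = 0 := by
  have hmul : ∀ x x' y y', ∑ i, (f i x a'' * x') ⊗ₜ[K] (g i y b'' * y')
      = L (x ⊗ₜ y) (a'' ⊗ₜ b'') * (x' ⊗ₜ y') := by
    intro x x' y y'
    simp [hL, Finset.sum_mul]
  have h := hstar (a ⊗ₜ b) (a' ⊗ₜ b') (a'' ⊗ₜ b'')
  have h' := hstar (a ⊗ₜ b') (a' ⊗ₜ b) (a'' ⊗ₜ b'')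
  have hprod : (a ⊗ₜ[K] b') * (a' ⊗ₜ b) = (a ⊗ₜ b) * (a' ⊗ₜ b') := by simp [mul_comm b]
  rw [hprod] at h'
  simp only [tmul_sub, sub_tmul, Finset.sum_sub_distrib, hmul]
  linear_combination h' - h

variable [FiniteDimensional K B]

lemma exists_sum_tmul_antisymmStarBrackets_left (hanti : ∀ z w, L z w = -L w z)
    (hstar : ∀ z w v, L (z * w) v = L z v * w + L w v * z - L 1 v * (z * w)) :
    ∃ (n : ℕ) (p : Fin n → A →ₗ[K] A →ₗ[K] A) (e : Fin n → B),
      (∀ l, p l ∈ antisymmStarBrackets K A) ∧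
      ∀ a a', L (a ⊗ₜ 1) (a' ⊗ₜ 1) = ∑ l, p l a a' ⊗ₜ[K] e l := by
  obtain ⟨n, κ, e, he, -, hκ⟩ :=
    exists_sum_tmul_of_forall_sliceLeft_mem (A := A) (⊤ : Submodule K B)
  let P : A →ₗ[K] A →ₗ[K] A ⊗[K] B :=
    L.compl₁₂ ((TensorProduct.mk K A B).flip 1) ((TensorProduct.mk K A B).flip 1)
  have hP : ∀ a a', L (a ⊗ₜ 1) (a' ⊗ₜ 1) = ∑ l, κ l (P a a') ⊗ₜ[K] e l :=
    fun a a' => hκ (P a a') fun _ => trivial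
  refine ⟨n, fun l => P.compr₂ (κ l), e, fun l => ⟨fun x y c => ?_, fun a a' => ?_⟩, hP⟩
  · have h := eq_of_sum_tmul_eq he (c := fun l => κ l (P (x * y) c))
      (c' := fun l => κ l (P x c) * y + κ l (P y c) * x - κ l (P 1 c) * (x * y)) <| by
      have hxy := hstar (x ⊗ₜ 1) (y ⊗ₜ 1) (c ⊗ₜ 1)
      rw [tmul_mul_tmul, mul_one, one_def, hP, hP, hP, hP] at hxy
      simp only [hxy, Finset.sum_mul, tmul_mul_tmul, mul_one, add_tmul, sub_tmul,
        Finset.sum_add_distrib, Finset.sum_sub_distrib]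
    exact congrFun h l
  · simp [P, hanti (a ⊗ₜ 1)]

lemma exists_sum_tmul_firstOrderOps (hanti : ∀ z w, L z w = -L w z)
    (hstar : ∀ z w v, L (z * w) v = L z v * w + L w v * z - L 1 v * (z * w)) :
    ∃ (n : ℕ) (q : Fin n → A →ₗ[K] A) (d : Fin n → B →ₗ[K] B),
      (∀ j, q j ∈ firstOrderOps K A) ∧ (∀ j, d j ∈ firstOrderOps K B) ∧
      ∀ a b, L (a ⊗ₜ 1) (1 ⊗ₜ b) = ∑ j, q j a ⊗ₜ[K] d j b := by
  obtain ⟨n, κ, d, hd, hdM, hκ⟩ :=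
    exists_sum_tmul_apply_of_forall_sliceLeft_comp_mem (A := A) (firstOrderOps K B)
  let Q : A →ₗ[K] B →ₗ[K] A ⊗[K] B :=
    L.compl₁₂ ((TensorProduct.mk K A B).flip 1) (TensorProduct.mk K A B 1)
  have hQ : ∀ a b, L (a ⊗ₜ 1) (1 ⊗ₜ b) = ∑ j, κ j (Q a) ⊗ₜ[K] d j b := by
    refine fun a => hκ (Q a) fun φ x y => ?_
    have hxy := bracket_mul_right (L := fun z w => L z w) hanti hstar (a ⊗ₜ 1) (1 ⊗ₜ x) (1 ⊗ₜ y)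
    rw [tmul_mul_tmul, mul_one, one_def] at hxy
    simp [Q, hxy, sliceLeft_mul_one_tmul]
  refine ⟨n, fun j => κ j ∘ₗ Q, d, fun j x y => ?_, hdM, hQ⟩
  have h := eq_of_sum_tmul_apply_eq hd (c := fun j => κ j (Q (x * y)))
    (c' := fun j => κ j (Q x) * y + κ j (Q y) * x - κ j (Q 1) * (x * y)) fun b => by
    have hxy := hstar (x ⊗ₜ 1) (y ⊗ₜ 1) (1 ⊗ₜ b)
    rw [tmul_mul_tmul, mul_one, one_def, hQ, hQ, hQ, hQ] at hxy
    simp only [hxy, Finset.sum_mul, tmul_mul_tmul, mul_one, add_tmul, sub_tmul,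
      Finset.sum_add_distrib, Finset.sum_sub_distrib]
  exact congrFun h j

lemma exists_sum_tmul_antisymmStarBrackets_right (hanti : ∀ z w, L z w = -L w z)
    (hstar : ∀ z w v, L (z * w) v = L z v * w + L w v * z - L 1 v * (z * w)) :
    ∃ (n : ℕ) (κ : Fin n → A) (w : Fin n → B →ₗ[K] B →ₗ[K] B),
      (∀ t, w t ∈ antisymmStarBrackets K B) ∧
      ∀ b b', L (1 ⊗ₜ b) (1 ⊗ₜ b') = ∑ t, κ t ⊗ₜ[K] w t b b' := by
  obtain ⟨n, κ, m, -, hmM, hκ⟩ := exists_sum_tmul_apply_of_forall_sliceLeft_comp_mem (A := A)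
    ((antisymmStarBrackets K B).comap (TensorProduct.lcurry (RingHom.id K) B B B))
  let S : B →ₗ[K] B →ₗ[K] A ⊗[K] B :=
    L.compl₁₂ (TensorProduct.mk K A B 1) (TensorProduct.mk K A B 1)
  refine ⟨n, fun t => κ t (TensorProduct.lift S),
    fun t => TensorProduct.lcurry (RingHom.id K) B B B (m t), hmM, fun b b' => ?_⟩
  have hS := hκ (TensorProduct.lift S) (fun φ => ⟨fun x y c => ?_, fun x y => ?_⟩) (b ⊗ₜ b')
  · simpa [S] using hS
  · have hxy := hstar (1 ⊗ₜ x) (1 ⊗ₜ y) (1 ⊗ₜ c)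
    rw [tmul_mul_tmul, mul_one, one_def] at hxy
    simp [S, hxy, sliceLeft_mul_one_tmul]
  · simp [S, hanti (1 ⊗ₜ x)]

lemma isStarDecomposable_bracket_left_left (hanti : ∀ z w, L z w = -L w z)
    (hstar : ∀ z w v, L (z * w) v = L z v * w + L w v * z - L 1 v * (z * w)) :
    IsStarDecomposable fun (a a' : A) (b b' : B) =>
      L (a ⊗ₜ 1) (a' ⊗ₜ 1) * (1 ⊗ₜ[K] (b * b')) := by
  obtain ⟨n, p, e, hp, hP⟩ := exists_sum_tmul_antisymmStarBrackets_left hanti hstar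
  refine ⟨n, p, fun l => LinearMap.mul K B ∘ₗ LinearMap.mulLeft K (e l), fun a a' b b' => ?_,
    fun l => ⟨(hp l).1, mul_comp_mem_starBrackets (mulLeft_mem_firstOrderOps _),
      Or.inl ⟨(hp l).2, fun b b' => ?_⟩⟩⟩
  · simp [hP, Finset.sum_mul, mul_assoc]
  · simp only [LinearMap.comp_apply, LinearMap.mulLeft_apply, LinearMap.mul_apply']
    ring

lemma isStarDecomposable_bracket_left_right (h2 : (2 : K) ≠ 0) (hanti : ∀ z w, L z w = -L w z)
    (hstar : ∀ z w v, L (z * w) v = L z v * w + L w v * z - L 1 v * (z * w)) :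
    IsStarDecomposable fun (a a' : A) (b b' : B) =>
      L (a ⊗ₜ 1) (1 ⊗ₜ b') * (a' ⊗ₜ b) - L (a' ⊗ₜ 1) (1 ⊗ₜ b) * (a ⊗ₜ b')
        - L (a ⊗ₜ 1) 1 * (a' ⊗ₜ (b * b')) + L (a' ⊗ₜ 1) 1 * (a ⊗ₜ (b * b')) := by
  obtain ⟨n, q, d, hq, hd, hQ⟩ := exists_sum_tmul_firstOrderOps hanti hstar
  -- with `M a a' = q j a * a'` and `D b b' = d j b' * b`, the `j`-th summand is
  -- `M a a' ⊗ D b b' - M a' a ⊗ D b' b + (M a' a - M a a') ⊗ (d j 1 * b * b')`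
  have hpair : ∀ j, IsStarPair
      ((LinearMap.mul K A ∘ₗ q j).flip - LinearMap.mul K A ∘ₗ q j)
      (LinearMap.mul K B ∘ₗ LinearMap.mulLeft K (d j 1)) := fun j =>
    ⟨sub_mem_starBrackets (flip_mul_comp_mem_starBrackets _) (mul_comp_mem_starBrackets (hq j)),
      mul_comp_mem_starBrackets (mulLeft_mem_firstOrderOps _),
      Or.inl ⟨fun a a' => by simp, fun b b' => by simp; ring⟩⟩
  refine (IsStarDecomposable.sum Finset.univ fun j _ =>
    (isStarDecomposable_sub_flip h2 (mul_comp_mem_starBrackets (hq j))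
      (flip_mul_comp_mem_starBrackets _) (flip_mul_comp_mem_starBrackets (d j))
      (mul_comp_mem_starBrackets (hd j))).add (hpair j).isStarDecomposable).of_eq
    fun a a' b b' => ?_
  simp only [Finset.sum_apply, Pi.add_apply]
  rw [one_def, hQ, hQ, hQ, hQ]
  simp only [Finset.sum_mul, tmul_mul_tmul, ← Finset.sum_sub_distrib, ← Finset.sum_add_distrib]
  refine Finset.sum_congr rfl fun j _ => ?_
  simp [sub_tmul, mul_assoc]
  abel

lemma isStarDecomposable_bracket_right_right (hanti : ∀ z w, L z w = -L w z)
    (hstar : ∀ z w v, L (z * w) v = L z v * w + L w v * z - L 1 v * (z * w)) :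
    IsStarDecomposable fun (a a' : A) (b b' : B) =>
      L (1 ⊗ₜ b) (1 ⊗ₜ b') * ((a * a') ⊗ₜ 1) - L (1 ⊗ₜ b) 1 * ((a * a') ⊗ₜ b')
        - L 1 (1 ⊗ₜ b') * ((a * a') ⊗ₜ b) := by
  obtain ⟨n, κ, w, hw, hS⟩ := exists_sum_tmul_antisymmStarBrackets_right hanti hstar
  -- by antisymmetry, `w b b' - w b 1 * b' - w 1 b' * b = w b b' + (w b' 1 * b - w b 1 * b')`
  refine ⟨n, fun t => LinearMap.mul K A ∘ₗ LinearMap.mulLeft K (κ t),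
    fun t => w t + ((LinearMap.mul K B ∘ₗ (w t).flip 1).flip - LinearMap.mul K B ∘ₗ (w t).flip 1),
    fun a a' b b' => ?_, fun t => ⟨mul_comp_mem_starBrackets (mulLeft_mem_firstOrderOps _),
      add_mem (hw t).1 (sub_mem_starBrackets (flip_mul_comp_mem_starBrackets _)
        (mul_comp_mem_starBrackets (flip_apply_mem_firstOrderOps (hw t).1 1))),
      Or.inr ⟨fun a a' => ?_, fun b b' => ?_⟩⟩⟩
  · dsimp only
    rw [one_def, hS, hS, hS]
    simp only [Finset.sum_mul, tmul_mul_tmul, ← Finset.sum_sub_distrib]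
    refine Finset.sum_congr rfl fun t _ => ?_
    simp [(hw t).2 1 b', tmul_sub, tmul_add, tmul_neg, mul_assoc]
    abel
  · simp only [LinearMap.comp_apply, LinearMap.mulLeft_apply, LinearMap.mul_apply']
    ring
  · simp [(hw t).2 b b']
    ring

theorem isStarDecomposable_bracket_tmul (h2 : (2 : K) ≠ 0) (hanti : ∀ z w, L z w = -L w z)
    (hstar : ∀ z w v, L (z * w) v = L z v * w + L w v * z - L 1 v * (z * w)) :
    IsStarDecomposable fun (a a' : A) (b b' : B) => L (a ⊗ₜ b) (a' ⊗ₜ b') := by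
  have h11 : L 1 1 = 0 := by
    have h := hanti 1 1
    rw [← sub_eq_zero, sub_neg_eq_add, ← two_smul K, smul_eq_zero] at h
    exact h.resolve_left h2
  refine ((isStarDecomposable_bracket_left_left hanti hstar).add
    ((isStarDecomposable_bracket_left_right h2 hanti hstar).add
      (isStarDecomposable_bracket_right_right hanti hstar))).of_eq fun a a' b b' => ?_
  have h := bracket_mul_mul (L := fun z w => L z w) hanti hstar h11
    (a ⊗ₜ 1) (1 ⊗ₜ b) (a' ⊗ₜ 1) (1 ⊗ₜ b')
  simp only [tmul_mul_tmul, mul_one, one_mul] at h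
  simp only [Pi.add_apply, h]
  abel

end TensorBracket

/-- decomposition of anticommutative brackets satisfying identity (★)
on the tensor product `A ⊗ B` with `B` finite-dimensional. -/
theorem stmt_0 (K : Type*) [Field K] (h2 : (2 : K) ≠ 0)
    (A B : Type*) [CommRing A] [Algebra K A] [CommRing B] [Algebra K B]
    [FiniteDimensional K B]
    (L : (A ⊗[K] B) →ₗ[K] (A ⊗[K] B) →ₗ[K] (A ⊗[K] B))
    (hanti : ∀ z w : A ⊗[K] B, L z w = - L w z)
    (hstar : ∀ z w v : A ⊗[K] B, L (z * w) v = L z v * w + L w v * z - L 1 v * (z * w)) :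
    ∃ (n : ℕ) (f : Fin n → (A →ₗ[K] A →ₗ[K] A)) (g : Fin n → (B →ₗ[K] B →ₗ[K] B)),
      (∀ (a a' : A) (b b' : B),
        L (a ⊗ₜ[K] b) (a' ⊗ₜ[K] b') = ∑ i, f i a a' ⊗ₜ[K] g i b b') ∧
      (∀ i, ∀ a b c : A, f i (a * b) c = f i a c * b + f i b c * a - f i 1 c * (a * b)) ∧
      (∀ i, ∀ a b c : B, g i (a * b) c = g i a c * b + g i b c * a - g i 1 c * (a * b)) ∧
      (∀ i, ((∀ a a' : A, f i a a' = - f i a' a) ∧ (∀ b b' : B, g i b b' = g i b' b)) ∨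
            ((∀ a a' : A, f i a a' = f i a' a) ∧ (∀ b b' : B, g i b b' = - g i b' b))) ∧
      (∀ (a a' a'' : A) (b b' b'' : B),
        ∑ i, (f i a a'' * a' - f i a' a'' * a) ⊗ₜ[K] (g i b b'' * b' - g i b' b'' * b)
          = 0) := by
  obtain ⟨n, f, g, hL, hfg⟩ := isStarDecomposable_bracket_tmul h2 hanti hstar
  exact ⟨n, f, g, hL, fun i => (hfg i).1, fun i => (hfg i).2.1, fun i => (hfg i).2.2,
    sum_sub_tmul_sub_eq_zero hstar hL⟩
end

section
/- Let K be a field of characteristic ≠ 2 and n ≥ 1 a natural number. The truncated polynomial algebra K[x]/(xⁿ) is univariate-like: there exist an ideal I of K[x]/(xⁿ) and a K-linear map ∂: K[x]/(xⁿ) → K[x]/(xⁿ) such that (i) for every u ∈ I, the map f ↦ u·∂(f) is a derivation of K[x]/(xⁿ); (ii) every derivation of K[x]/(xⁿ) equals f ↦ u·∂(f) for a unique u ∈ I; and (iii) ∂(x₀) = 1 for some x₀ ∈ K[x]/(xⁿ). -/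
open Polynomial

/-! For monic `g`, let `∂` send the class of `f` in `R[X]/(g)` to the class of the derivative
of its reduced representative `f %ₘ g`. Differentiating `f = f %ₘ g + g * (f /ₘ g)` gives
`f' ≡ ∂ f + g' * (f /ₘ g)` modulo `g`, so for `u` in the annihilator `I` of `g'(root)` the map
`u * ∂` is the derivation `u * d/dX`. Conversely every derivation is `f ↦ f'(root) * D root`,
and `D root ∈ I` because `0 = D (g(root)) = g'(root) * D root`; when `deg g ≥ 2`, uniqueness
comes from `∂ root = 1`. When `deg g ≤ 1` the algebra is a quotient of `R`, so all derivations
vanish and `I = 0`, `∂ = id` do the job. -/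

def IsUnivariateLike (R A : Type*) [CommRing R] [CommRing A] [Algebra R A] : Prop :=
  ∃ (I : Ideal A) (par : A →ₗ[R] A),
    (∀ u ∈ I, ∀ a b : A, u * par (a * b) = u * par a * b + a * (u * par b)) ∧
    (∀ D : Derivation R A A, ∃! u, u ∈ I ∧ ∀ a, D a = u * par a) ∧
    ∃ x₀, par x₀ = 1

theorem Derivation.eq_zero_of_surjective_algebraMap {R A M : Type*} [CommSemiring R]
    [CommSemiring A] [Algebra R A] [AddCommMonoid M] [Module A M] [Module R M]
    (h : Function.Surjective (algebraMap R A)) (D : Derivation R A M) : D = 0 := by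
  ext a
  obtain ⟨r, rfl⟩ := h a
  exact D.map_algebraMap r

theorem IsUnivariateLike.of_surjective_algebraMap {R A : Type*} [CommRing R] [CommRing A]
    [Algebra R A] (h : Function.Surjective (algebraMap R A)) : IsUnivariateLike R A := by
  refine ⟨⊥, LinearMap.id, ?_, fun D => ⟨0, ?_, ?_⟩, 1, rfl⟩
  · rintro u hu - -
    simp [Ideal.mem_bot.mp hu]
  · simp [Derivation.eq_zero_of_surjective_algebraMap h D]
  · exact fun u hu => Ideal.mem_bot.mp hu.1

namespace AdjoinRoot

variable {R : Type*} [CommRing R] {g : R[X]}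

theorem algebraMap_surjective_of_natDegree_le_one (hg : g.Monic) (h : g.natDegree ≤ 1) :
    Function.Surjective (algebraMap R (AdjoinRoot g)) := by
  intro a
  induction a using AdjoinRoot.induction_on with | ih f =>
  have hdeg : (f %ₘ g).natDegree = 0 := by
    rcases eq_or_ne g 1 with rfl | hg1
    · simp
    · have := natDegree_modByMonic_lt f hg hg1
      omega
  refine ⟨(f %ₘ g).coeff 0, ?_⟩
  rw [algebraMap_eq, of, RingHom.comp_apply, ← eq_C_of_natDegree_eq_zero hdeg,
    ← mk_leftInverse hg (mk g f), modByMonicHom_mk]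

noncomputable def derivativeModByMonic (hg : g.Monic) : AdjoinRoot g →ₗ[R] AdjoinRoot g :=
  (mkₐ g).toLinearMap ∘ₗ derivative ∘ₗ modByMonicHom hg

theorem derivativeModByMonic_mk (hg : g.Monic) (f : R[X]) :
    derivativeModByMonic hg (mk g f) = mk g (derivative (f %ₘ g)) := by
  simp [derivativeModByMonic, modByMonicHom_mk]

theorem derivativeModByMonic_root (hg : g.Monic) (h : 1 < g.natDegree) :
    derivativeModByMonic hg (root g) = 1 := by
  have : Nontrivial R := by
    by_contra hR
    rw [not_nontrivial_iff_subsingleton] at hR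
    simp [Subsingleton.elim g 0] at h
  have hX : (X : R[X]) %ₘ g = X := by
    rw [modByMonic_eq_self_iff hg, degree_X, degree_eq_natDegree hg.ne_zero]
    exact_mod_cast h
  rw [← mk_X, derivativeModByMonic_mk, hX, derivative_X, map_one]

theorem mk_derivative (hg : g.Monic) (f : R[X]) :
    mk g (derivative f) =
      derivativeModByMonic hg (mk g f) + mk g (derivative g) * mk g (f /ₘ g) := by
  conv_lhs => rw [← modByMonic_add_div f g]
  simp [derivativeModByMonic_mk, derivative_mul, mk_self]

theorem mul_mk_derivative_of_mul_eq_zero (hg : g.Monic) {u : AdjoinRoot g}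
    (hu : u * mk g (derivative g) = 0) (f : R[X]) :
    u * mk g (derivative f) = u * derivativeModByMonic hg (mk g f) := by
  rw [mk_derivative hg, mul_add, ← mul_assoc, hu, zero_mul, add_zero]

theorem derivation_apply_mk (D : Derivation R (AdjoinRoot g) (AdjoinRoot g)) (f : R[X]) :
    D (mk g f) = mk g (derivative f) * D (root g) := by
  rw [← aeval_eq, D.map_aeval, aeval_eq, smul_eq_mul]

theorem derivation_root_mul_mk_derivative (D : Derivation R (AdjoinRoot g) (AdjoinRoot g)) :
    D (root g) * mk g (derivative g) = 0 := by
  rw [mul_comm, ← derivation_apply_mk, mk_self, map_zero]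

theorem isUnivariateLike (hg : g.Monic) : IsUnivariateLike R (AdjoinRoot g) := by
  rcases le_or_gt g.natDegree 1 with hle | hlt
  · exact .of_surjective_algebraMap (algebraMap_surjective_of_natDegree_le_one hg hle)
  have mem_annihilator (u : AdjoinRoot g) :
      u ∈ (Ideal.span {mk g (derivative g)}).annihilator ↔ u * mk g (derivative g) = 0 := by
    rw [Submodule.mem_annihilator_span_singleton, smul_eq_mul]
  refine ⟨(Ideal.span {mk g (derivative g)}).annihilator, derivativeModByMonic hg,
    fun u hu a b => ?_, fun D => ?_, root g, derivativeModByMonic_root hg hlt⟩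
  · rw [mem_annihilator] at hu
    induction a using AdjoinRoot.induction_on with | ih f₁ =>
    induction b using AdjoinRoot.induction_on with | ih f₂ =>
    rw [← map_mul, ← mul_mk_derivative_of_mul_eq_zero hg hu,
      ← mul_mk_derivative_of_mul_eq_zero hg hu, ← mul_mk_derivative_of_mul_eq_zero hg hu]
    simp only [derivative_mul, map_add, map_mul]
    ring
  · have hD := derivation_root_mul_mk_derivative D
    refine ⟨D (root g), ⟨(mem_annihilator _).mpr hD, fun a => ?_⟩, fun v hv => ?_⟩
    · induction a using AdjoinRoot.induction_on with | ih f =>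
      rw [derivation_apply_mk, mul_comm, mul_mk_derivative_of_mul_eq_zero hg hD]
    · rw [hv.2, derivativeModByMonic_root hg hlt, mul_one]

end AdjoinRoot

theorem stmt_2_general (K : Type*) [Field K] (n : ℕ) :
    ∃ (I : Ideal (Polynomial K ⧸ Ideal.span {(X : Polynomial K) ^ n}))
      (par : (Polynomial K ⧸ Ideal.span {(X : Polynomial K) ^ n}) →ₗ[K]
             (Polynomial K ⧸ Ideal.span {(X : Polynomial K) ^ n})),
      (∀ u ∈ I, ∀ a b : Polynomial K ⧸ Ideal.span {(X : Polynomial K) ^ n},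
        u * par (a * b) = u * par a * b + a * (u * par b)) ∧
      (∀ D : Derivation K (Polynomial K ⧸ Ideal.span {(X : Polynomial K) ^ n})
               (Polynomial K ⧸ Ideal.span {(X : Polynomial K) ^ n}),
        ∃! u, u ∈ I ∧ ∀ a, D a = u * par a) ∧
      (∃ x₀, par x₀ = 1) :=
  AdjoinRoot.isUnivariateLike (monic_X_pow n)

/-- the truncated polynomial algebra `K[x]/(xⁿ)`, `n ≥ 1`,
is univariate-like. -/
theorem stmt_2 (K : Type*) [Field K] (h2 : (2 : K) ≠ 0) (n : ℕ) (hn : 1 ≤ n) :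
    ∃ (I : Ideal (Polynomial K ⧸ Ideal.span {(X : Polynomial K) ^ n}))
      (par : (Polynomial K ⧸ Ideal.span {(X : Polynomial K) ^ n}) →ₗ[K]
             (Polynomial K ⧸ Ideal.span {(X : Polynomial K) ^ n})),
      (∀ u ∈ I, ∀ a b : Polynomial K ⧸ Ideal.span {(X : Polynomial K) ^ n},
        u * par (a * b) = u * par a * b + a * (u * par b)) ∧
      (∀ D : Derivation K (Polynomial K ⧸ Ideal.span {(X : Polynomial K) ^ n})
               (Polynomial K ⧸ Ideal.span {(X : Polynomial K) ^ n}),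
        ∃! u, u ∈ I ∧ ∀ a, D a = u * par a) ∧
      (∃ x₀, par x₀ = 1) :=
  stmt_2_general K n
end

section
/- Let K be a field of characteristic ≠ 2 and n ≥ 1 a natural number such that n is not divisible by the characteristic of K (i.e., n·1 ≠ 0 in K). Then every derivation D of the truncated polynomial algebra K[x]/(xⁿ) is of the form D(g) = f · (dg/dx) for a unique element f of the ideal generated by the class of x in K[x]/(xⁿ), where d/dx denotes the (well-defined) formal derivative with respect to x on K[x]/(xⁿ) composed with multiplication by elements of (x̄), making f·d/dx well-defined on the quotient. -/
/-!
A derivation of `K[x]/(xⁿ)` is determined by `f = D x̄` through the Leibniz rule, which gives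
`D g = f · g'`. Moreover `0 = D (x̄ⁿ) = n x̄ⁿ⁻¹ f` with `n` invertible, so `x̄ⁿ⁻¹ f = 0`, which
forces `f ∈ (x̄)`.
-/

open Polynomial

theorem Polynomial.mem_span_mk_X_of_mk_X_pow_mul_eq_zero {R : Type*} [CommRing R] {n : ℕ}
    {y : R[X] ⧸ Ideal.span {(X : R[X]) ^ (n + 1)}}
    (hy : Ideal.Quotient.mk _ X ^ n * y = 0) :
    y ∈ Ideal.span {Ideal.Quotient.mk (Ideal.span {(X : R[X]) ^ (n + 1)}) X} := by
  obtain ⟨p, rfl⟩ := Ideal.Quotient.mk_surjective y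
  rw [← map_pow, ← map_mul, Ideal.Quotient.eq_zero_iff_mem, Ideal.mem_span_singleton,
    pow_succ] at hy
  obtain ⟨q, hq⟩ := hy
  rw [mul_assoc] at hq
  rw [(isRegular_X_pow n).left hq, map_mul]
  exact Ideal.mul_mem_right _ _ (Ideal.mem_span_singleton_self _)

theorem Derivation.pow_smul_apply_eq_zero_of_pow_succ_eq_zero {K A M : Type*} [Field K]
    [CommRing A] [Algebra K A] [AddCommGroup M] [Module A M] [Module K M] [IsScalarTower K A M]
    (D : Derivation K A M) {a : A} {n : ℕ} (ha : a ^ (n + 1) = 0)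
    (hn : ((n + 1 : ℕ) : K) ≠ 0) : a ^ n • D a = 0 := by
  have h := D.leibniz_pow a (n + 1)
  rw [ha, D.map_zero, Nat.add_sub_cancel, ← Nat.cast_smul_eq_nsmul K, eq_comm, smul_eq_zero] at h
  exact h.resolve_left hn

theorem Derivation.apply_mk_eq_mk_derivative_smul {R M : Type*} [CommRing R] (I : Ideal R[X])
    [AddCommGroup M] [Module (R[X] ⧸ I) M] [Module R M] [IsScalarTower R (R[X] ⧸ I) M]
    (D : Derivation R (R[X] ⧸ I) M) (p : R[X]) :
    D (Ideal.Quotient.mk I p) = Ideal.Quotient.mk I (derivative p) • D (Ideal.Quotient.mk I X) := by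
  have h : ∀ q : R[X], Ideal.Quotient.mk I q = aeval (Ideal.Quotient.mk I X) q := fun q => by
    rw [← Ideal.Quotient.mkₐ_eq_mk R, aeval_algHom_apply, aeval_X_left_apply]
  rw [h p, D.map_aeval, ← h]

theorem stmt_3_general (K : Type*) [Field K] (n : ℕ)
    (hchar : (n : K) ≠ 0)
    (D : Derivation K (Polynomial K ⧸ Ideal.span {(X : Polynomial K) ^ n})
           (Polynomial K ⧸ Ideal.span {(X : Polynomial K) ^ n})) :
    ∃! f : Polynomial K ⧸ Ideal.span {(X : Polynomial K) ^ n},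
      f ∈ Ideal.span {Ideal.Quotient.mk (Ideal.span {(X : Polynomial K) ^ n}) X} ∧
      ∀ p : Polynomial K,
        D (Ideal.Quotient.mk (Ideal.span {(X : Polynomial K) ^ n}) p) =
          f * Ideal.Quotient.mk (Ideal.span {(X : Polynomial K) ^ n}) (derivative p) := by
  have hn : n ≠ 0 := by rintro rfl; exact hchar Nat.cast_zero
  obtain ⟨m, rfl⟩ := Nat.exists_eq_succ_of_ne_zero hn
  set mk := Ideal.Quotient.mk (Ideal.span {(X : K[X]) ^ (m + 1)})
  have hD (p : K[X]) : D (mk p) = D (mk X) * mk (derivative p) := by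
    rw [D.apply_mk_eq_mk_derivative_smul, smul_eq_mul, mul_comm]
  have hX_pow : mk X ^ (m + 1) = 0 := by
    rw [← map_pow, Ideal.Quotient.eq_zero_iff_mem]
    exact Ideal.mem_span_singleton_self _
  refine ⟨D (mk X), ⟨?_, hD⟩, fun g ⟨_, hg⟩ => by simpa using (hg X).symm⟩
  exact mem_span_mk_X_of_mk_X_pow_mul_eq_zero
    (D.pow_smul_apply_eq_zero_of_pow_succ_eq_zero hX_pow hchar)

/-- if `n` is not divisible by the characteristic of `K`, every derivation
of `K[x]/(xⁿ)` is `f · d/dx` for a unique `f` in the ideal generated by the class of `x`. -/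
theorem stmt_3 (K : Type*) [Field K] (h2 : (2 : K) ≠ 0) (n : ℕ) (hn : 1 ≤ n)
    (hchar : (n : K) ≠ 0)
    (D : Derivation K (Polynomial K ⧸ Ideal.span {(X : Polynomial K) ^ n})
           (Polynomial K ⧸ Ideal.span {(X : Polynomial K) ^ n})) :
    ∃! f : Polynomial K ⧸ Ideal.span {(X : Polynomial K) ^ n},
      f ∈ Ideal.span {Ideal.Quotient.mk (Ideal.span {(X : Polynomial K) ^ n}) X} ∧
      ∀ p : Polynomial K,
        D (Ideal.Quotient.mk (Ideal.span {(X : Polynomial K) ^ n}) p) =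
          f * Ideal.Quotient.mk (Ideal.span {(X : Polynomial K) ^ n}) (derivative p) :=
  stmt_3_general K n hchar D
end

section
/- Let K be a field of characteristic ≠ 2 and let A be a commutative associative unital K-algebra that is univariate-like, with ideal I, K-linear map ∂: A → A, and x₀ ∈ A with ∂(x₀) = 1 witnessing this. Then every anticommutative bracket [·,·] on A satisfying identity (★) is of the form [a,b] = u·(a∂(b) − b∂(a)) for some u ∈ I. -/
/-!
For fixed `c`, identity (★) says exactly that `a ↦ [a,c] - [1,c]·a` is a derivation, so it equals
`a ↦ w(c)·∂a` for some `w(c) ∈ I`. Anticommutativity (and `2` invertible) gives `[a,a] = 0`, whence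
`[a,c] = w(c)·∂a - w(1)·a·∂c`. Evaluating at `x₀`, where `∂x₀ = 1`, and using anticommutativity once
more forces `w(c) = w(1)·c`, so `u = -w(1)` works.
-/

section Bracket

variable {A : Type*} [CommRing A]

lemma isUnit_two_of_algebra {K : Type*} [Field K] [Algebra K A] (h2 : (2 : K) ≠ 0) :
    IsUnit (2 : A) := by
  simpa only [map_ofNat] using (IsUnit.mk0 _ h2).map (algebraMap K A)

lemma apply_self_eq_zero_of_anticomm (h2 : IsUnit (2 : A)) {L : A → A → A}
    (hanti : ∀ a b, L a b = -L b a) (a : A) : L a a = 0 :=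
  h2.mul_right_eq_zero.mp (by linear_combination hanti a a)

lemma eq_neg_coeff_one_mul_of_sub_eq_mul {L : A → A → A} {par w : A → A} {x₀ : A}
    (hw : ∀ a c, L a c - L 1 c * a = w c * par a) (hanti : ∀ a b, L a b = -L b a)
    (hdiag : ∀ a, L a a = 0) (hx₀ : par x₀ = 1) (a b : A) :
    L a b = -w 1 * (a * par b - b * par a) := by
  have h1c : ∀ c, L 1 c = -(w 1 * par c) := fun c => by
    linear_combination hanti 1 c - hw c 1 - c * hdiag 1
  have hform : ∀ a c, L a c = w c * par a - w 1 * par c * a := fun a c => by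
    linear_combination hw a c + a * h1c c
  have hwx₀ : w x₀ = w 1 * x₀ := by
    linear_combination -(hform x₀ x₀) + hdiag x₀ - (w x₀ - w 1 * x₀) * hx₀
  have hw_eq : ∀ c, w c = w 1 * c := fun c => by
    linear_combination hanti x₀ c - hform x₀ c - hform c x₀ - par c * hwx₀ -
      (w c - w 1 * c) * hx₀
  linear_combination hform a b + par a * hw_eq b

end Bracket

section StarIdentity

variable {K A : Type*} [Field K] [CommRing A] [Algebra K A]

def starDerivation (L : A →ₗ[K] A →ₗ[K] A)
    (hstar : ∀ a b c : A, L (a * b) c = L a c * b + L b c * a - L 1 c * (a * b)) (c : A) :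
    Derivation K A A where
  toLinearMap := L.flip c - L 1 c • LinearMap.id
  map_one_eq_zero' := by simp
  leibniz' a b := by
    simp only [LinearMap.sub_apply, LinearMap.smul_apply, LinearMap.flip_apply,
      LinearMap.id_coe, id_eq, smul_eq_mul, hstar a b c]
    ring

lemma starDerivation_apply (L : A →ₗ[K] A →ₗ[K] A)
    (hstar : ∀ a b c : A, L (a * b) c = L a c * b + L b c * a - L 1 c * (a * b)) (c a : A) :
    starDerivation L hstar c a = L a c - L 1 c * a := by
  simp [starDerivation, smul_eq_mul]

end StarIdentity

theorem stmt_4_general (K : Type*) [Field K] (h2 : (2 : K) ≠ 0)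
    (A : Type*) [CommRing A] [Algebra K A]
    (I : Ideal A) (par : A →ₗ[K] A) (x₀ : A)
    (hall : ∀ D : Derivation K A A, ∃! u : A, u ∈ I ∧ ∀ a : A, D a = u * par a)
    (hx₀ : par x₀ = 1)
    (L : A →ₗ[K] A →ₗ[K] A)
    (hanti : ∀ a b : A, L a b = - L b a)
    (hstar : ∀ a b c : A, L (a * b) c = L a c * b + L b c * a - L 1 c * (a * b)) :
    ∃ u ∈ I, ∀ a b : A, L a b = u * (a * par b - b * par a) := by
  choose w hwI hw using fun c => (hall (starDerivation L hstar c)).exists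
  have hdiag := apply_self_eq_zero_of_anticomm (isUnit_two_of_algebra h2) (L := fun a b => L a b)
    hanti
  refine ⟨-w 1, I.neg_mem (hwI 1), ?_⟩
  refine eq_neg_coeff_one_mul_of_sub_eq_mul (L := fun a b => L a b) (fun a c => ?_) hanti hdiag hx₀
  rw [← starDerivation_apply L hstar, hw]

/-- on a univariate-like algebra, every anticommutative bracket
satisfying identity (★) has the form `[a,b] = u·(a∂(b) − b∂(a))` for some `u ∈ I`. -/
theorem stmt_4 (K : Type*) [Field K] (h2 : (2 : K) ≠ 0)
    (A : Type*) [CommRing A] [Algebra K A]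
    (I : Ideal A) (par : A →ₗ[K] A) (x₀ : A)
    (hder : ∀ u ∈ I, ∀ a b : A, u * par (a * b) = u * par a * b + a * (u * par b))
    (hall : ∀ D : Derivation K A A, ∃! u : A, u ∈ I ∧ ∀ a : A, D a = u * par a)
    (hx₀ : par x₀ = 1)
    (L : A →ₗ[K] A →ₗ[K] A)
    (hanti : ∀ a b : A, L a b = - L b a)
    (hstar : ∀ a b c : A, L (a * b) c = L a c * b + L b c * a - L 1 c * (a * b)) :
    ∃ u ∈ I, ∀ a b : A, L a b = u * (a * par b - b * par a) :=
  stmt_4_general K h2 A I par x₀ hall hx₀ L hanti hstar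
end

section
/- Let K be a field of characteristic ≠ 2 and let A be a commutative associative unital K-algebra that is univariate-like, with ideal I, K-linear map ∂: A → A, and x₀ ∈ A with ∂(x₀) = 1 witnessing this. Then every symmetric bracket [·,·] on A satisfying identity (★) is of the form [a,b] = u·∂(a)∂(b) + v·∂(ab) + ab·w for some u, v ∈ I and w ∈ A. -/
/-!
Fixing the second argument, identity (★) says exactly that `a ↦ [a,c] - a·[1,c]` is a derivation,
so `[a,c] = U(c)·∂a + a·[1,c]` with `U(c) ∈ I`. Symmetry of the bracket, evaluated against `x₀`
(where `∂x₀ = 1`), forces `U(c) = u·∂c + c·U(1)` with `u = U(x₀) - x₀·U(1)`. Substituting back,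
the terms `U(1)·(b·∂a + a·∂b)` recombine into `U(1)·∂(ab)` because `U(1)·∂` is a derivation.
-/

section StarBracket

variable {K A : Type*} [CommRing K] [CommRing A] [Algebra K A]

def Derivation.ofStarBracket (L : A →ₗ[K] A →ₗ[K] A)
    (hstar : ∀ a b c : A, L (a * b) c = L a c * b + L b c * a - L 1 c * (a * b)) (c : A) :
    Derivation K A A where
  toLinearMap := L.flip c - LinearMap.mulRight K (L 1 c)
  map_one_eq_zero' := by simp
  leibniz' a b := by
    simp only [LinearMap.sub_apply, LinearMap.flip_apply, LinearMap.mulRight_apply, smul_eq_mul,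
      hstar a b c]
    ring

@[simp]
theorem Derivation.ofStarBracket_apply (L : A →ₗ[K] A →ₗ[K] A)
    (hstar : ∀ a b c : A, L (a * b) c = L a c * b + L b c * a - L 1 c * (a * b)) (c a : A) :
    Derivation.ofStarBracket L hstar c a = L a c - a * L 1 c :=
  rfl

theorem exists_starBracket_eq_mul_par_add (I : Ideal A) (par : A →ₗ[K] A)
    (hall : ∀ D : Derivation K A A, ∃! u : A, u ∈ I ∧ ∀ a : A, D a = u * par a)
    (L : A →ₗ[K] A →ₗ[K] A)
    (hstar : ∀ a b c : A, L (a * b) c = L a c * b + L b c * a - L 1 c * (a * b)) (c : A) :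
    ∃ u ∈ I, ∀ a : A, L a c = u * par a + a * L 1 c := by
  obtain ⟨u, ⟨hu, hD⟩, -⟩ := hall (Derivation.ofStarBracket L hstar c)
  refine ⟨u, hu, fun a => ?_⟩
  linear_combination (Derivation.ofStarBracket_apply L hstar c a).symm.trans (hD a)

theorem coeff_eq_of_symm (par : A → A) (x₀ : A) (hx₀ : par x₀ = 1) (L : A → A → A)
    (hsymm : ∀ a b : A, L a b = L b a) (U : A → A)
    (hU : ∀ c a : A, L a c = U c * par a + a * L 1 c) (c : A) :
    U c = (U x₀ - x₀ * U 1) * par c + c * U 1 := by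
  have hL1 : ∀ c : A, L 1 c = U 1 * par c + c * L 1 1 := fun c => hsymm 1 c ▸ hU 1 c
  have h := hsymm x₀ c
  rw [hU c x₀, hU x₀ c, hx₀, hL1 c, hL1 x₀, hx₀] at h
  linear_combination h

end StarBracket

theorem stmt_5_general (K : Type*) [Field K]
    (A : Type*) [CommRing A] [Algebra K A]
    (I : Ideal A) (par : A →ₗ[K] A) (x₀ : A)
    (hder : ∀ u ∈ I, ∀ a b : A, u * par (a * b) = u * par a * b + a * (u * par b))
    (hall : ∀ D : Derivation K A A, ∃! u : A, u ∈ I ∧ ∀ a : A, D a = u * par a)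
    (hx₀ : par x₀ = 1)
    (L : A →ₗ[K] A →ₗ[K] A)
    (hsymm : ∀ a b : A, L a b = L b a)
    (hstar : ∀ a b c : A, L (a * b) c = L a c * b + L b c * a - L 1 c * (a * b)) :
    ∃ u ∈ I, ∃ v ∈ I, ∃ w : A,
      ∀ a b : A, L a b = u * par a * par b + v * par (a * b) + a * b * w := by
  choose U hUI hU using exists_starBracket_eq_mul_par_add I par hall L hstar
  have hUc := coeff_eq_of_symm par x₀ hx₀ (fun a b => L a b) hsymm U hU
  refine ⟨U x₀ - x₀ * U 1, I.sub_mem (hUI x₀) (I.mul_mem_left x₀ (hUI 1)),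
    U 1, hUI 1, L 1 1, fun a b => ?_⟩
  have hab := hU b a
  rw [hUc b, hsymm 1 b, hU 1 b] at hab
  linear_combination hab - hder (U 1) (hUI 1) a b

/-- on a univariate-like algebra, every symmetric bracket satisfying
identity (★) has the form `[a,b] = u·∂(a)∂(b) + v·∂(ab) + ab·w` with `u, v ∈ I`, `w ∈ A`. -/
theorem stmt_5 (K : Type*) [Field K] (h2 : (2 : K) ≠ 0)
    (A : Type*) [CommRing A] [Algebra K A]
    (I : Ideal A) (par : A →ₗ[K] A) (x₀ : A)
    (hder : ∀ u ∈ I, ∀ a b : A, u * par (a * b) = u * par a * b + a * (u * par b))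
    (hall : ∀ D : Derivation K A A, ∃! u : A, u ∈ I ∧ ∀ a : A, D a = u * par a)
    (hx₀ : par x₀ = 1)
    (L : A →ₗ[K] A →ₗ[K] A)
    (hsymm : ∀ a b : A, L a b = L b a)
    (hstar : ∀ a b c : A, L (a * b) c = L a c * b + L b c * a - L 1 c * (a * b)) :
    ∃ u ∈ I, ∃ v ∈ I, ∃ w : A,
      ∀ a b : A, L a b = u * par a * par b + v * par (a * b) + a * b * w :=
  stmt_5_general K A I par x₀ hder hall hx₀ L hsymm hstar
end

section
/- Let K be a field of characteristic ≠ 2. Every anticommutative bracket on K[x]/(x²) satisfying identity (★) is a scalar multiple of the bracket φ given by φ(f,g) = x̄·(f·g' − g·f'), where f ↦ f' is induced by formal differentiation and x̄ is the class of x. In other words, the space of anticommutative brackets on K[x]/(x²) satisfying (★) is one-dimensional, spanned by φ. -/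
/-!
Write `ε` for the class of `X`, so that `K[X]/(X²)` has basis `1, ε` and `ε² = 0`. Identity (★)
with `a = b = ε` reads `0 = 2 L(ε,c) ε`, so `L(1,ε) = -L(ε,1)` annihilates `ε` and is therefore
`c • ε` for some `c : K`. An alternating bilinear map is determined on the span of `1, ε` by
`L(1,ε)` through the determinant of coordinates, and `ε (f g' - g f') = (f₀ g₁ - f₁ g₀) • ε` is
that same determinant.
-/

open Polynomial

section Alternating

variable {K M N : Type*} [Field K] [AddCommGroup M] [Module K M] [AddCommGroup N] [Module K N]

theorem LinearMap.apply_self_eq_zero_of_antisymm (h2 : (2 : K) ≠ 0) {L : M →ₗ[K] M →ₗ[K] N}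
    (hanti : ∀ a b, L a b = -L b a) (a : M) : L a a = 0 := by
  have h : (2 : K) • L a a = 0 := by
    rw [two_smul]
    nth_rewrite 2 [hanti]
    exact add_neg_cancel _
  exact (smul_eq_zero.mp h).resolve_left h2

theorem LinearMap.apply_add_smul_add_smul_of_antisymm (h2 : (2 : K) ≠ 0)
    {L : M →ₗ[K] M →ₗ[K] N} (hanti : ∀ a b, L a b = -L b a) (u v : M) (a b c d : K) :
    L (a • u + b • v) (c • u + d • v) = (a * d - b * c) • L u v := by
  simp only [map_add, map_smul, LinearMap.add_apply, LinearMap.smul_apply,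
    LinearMap.apply_self_eq_zero_of_antisymm h2 hanti, hanti v u]
  module

end Alternating

theorem bracket_mul_self_eq_zero {K A : Type*} [Field K] [CommRing A] [Algebra K A]
    (h2 : (2 : K) ≠ 0) {L : A →ₗ[K] A →ₗ[K] A}
    (hstar : ∀ a b c, L (a * b) c = L a c * b + L b c * a - L 1 c * (a * b))
    {a : A} (ha : a * a = 0) (c : A) : L a c * a = 0 := by
  have h : (2 : K) • (L a c * a) = 0 := by
    rw [two_smul]
    simpa [ha] using (hstar a a c).symm
  exact (smul_eq_zero.mp h).resolve_left h2

section QuotientXSq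

variable {K : Type*} [Field K]

local notation "ε" => Ideal.Quotient.mk (Ideal.span {(X : K[X]) ^ 2}) X

theorem mk_eq_coeff_zero_smul_add_coeff_one_smul (p : K[X]) :
    Ideal.Quotient.mk (Ideal.span {(X : K[X]) ^ 2}) p = p.coeff 0 • 1 + p.coeff 1 • ε := by
  have hp : Ideal.Quotient.mk (Ideal.span {(X : K[X]) ^ 2}) p =
      Ideal.Quotient.mk (Ideal.span {(X : K[X]) ^ 2}) (C (p.coeff 0) + C (p.coeff 1) * X) := by
    rw [Ideal.Quotient.eq, Ideal.mem_span_singleton, X_pow_dvd_iff]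
    intro d hd
    interval_cases d <;> simp
  rw [hp, map_add, map_mul, ← algebraMap_eq (R := K), Ideal.Quotient.mk_algebraMap,
    Ideal.Quotient.mk_algebraMap, Algebra.algebraMap_eq_smul_one, Algebra.algebraMap_eq_smul_one,
    smul_one_mul]

theorem mk_X_mul_self : ε * ε = (0 : K[X] ⧸ Ideal.span {(X : K[X]) ^ 2}) := by
  rw [← map_mul, ← sq, Ideal.Quotient.eq_zero_iff_mem]
  exact Ideal.mem_span_singleton_self _

theorem mk_X_mul_mk (p : K[X]) :
    ε * Ideal.Quotient.mk (Ideal.span {(X : K[X]) ^ 2}) p = p.coeff 0 • ε := by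
  rw [mk_eq_coeff_zero_smul_add_coeff_one_smul p, mul_add, mul_smul_comm, mul_smul_comm,
    mul_one, mk_X_mul_self, smul_zero, add_zero]

theorem mk_X_ne_zero : ε ≠ (0 : K[X] ⧸ Ideal.span {(X : K[X]) ^ 2}) := by
  rw [Ne, Ideal.Quotient.eq_zero_iff_mem, Ideal.mem_span_singleton, X_pow_dvd_iff]
  push Not
  exact ⟨1, one_lt_two, by simp⟩

theorem exists_eq_smul_mk_X_of_mul_mk_X_eq_zero {y : K[X] ⧸ Ideal.span {(X : K[X]) ^ 2}}
    (hy : y * ε = 0) : ∃ a : K, y = a • ε := by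
  obtain ⟨r, rfl⟩ := Ideal.Quotient.mk_surjective y
  rw [mul_comm, mk_X_mul_mk, smul_eq_zero] at hy
  have hr : r.coeff 0 = 0 := hy.resolve_right mk_X_ne_zero
  exact ⟨r.coeff 1, by rw [mk_eq_coeff_zero_smul_add_coeff_one_smul r, hr, zero_smul, zero_add]⟩

theorem mk_X_mul_wronskian (p q : K[X]) :
    ε * (Ideal.Quotient.mk (Ideal.span {(X : K[X]) ^ 2}) p *
        Ideal.Quotient.mk (Ideal.span {(X : K[X]) ^ 2}) (derivative q) -
      Ideal.Quotient.mk (Ideal.span {(X : K[X]) ^ 2}) q *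
        Ideal.Quotient.mk (Ideal.span {(X : K[X]) ^ 2}) (derivative p)) =
    (p.coeff 0 * q.coeff 1 - p.coeff 1 * q.coeff 0) • ε := by
  rw [mul_sub, ← mul_assoc, ← mul_assoc, mk_X_mul_mk, mk_X_mul_mk, smul_mul_assoc,
    smul_mul_assoc, mk_X_mul_mk, mk_X_mul_mk]
  simp only [coeff_derivative, zero_add, Nat.cast_zero, mul_one, smul_smul]
  rw [← sub_smul, mul_comm (p.coeff 1)]

end QuotientXSq

/-- every anticommutative bracket on `K[x]/(x²)` satisfying identity (★)
is a scalar multiple of `φ(f,g) = x̄·(f·g' − g·f')`. -/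
theorem stmt_6 (K : Type*) [Field K] (h2 : (2 : K) ≠ 0)
    (L : (Polynomial K ⧸ Ideal.span {(X : Polynomial K) ^ 2}) →ₗ[K]
         (Polynomial K ⧸ Ideal.span {(X : Polynomial K) ^ 2}) →ₗ[K]
         (Polynomial K ⧸ Ideal.span {(X : Polynomial K) ^ 2}))
    (hanti : ∀ a b, L a b = - L b a)
    (hstar : ∀ a b c, L (a * b) c = L a c * b + L b c * a - L 1 c * (a * b)) :
    ∃ c : K, ∀ p q : Polynomial K,
      L (Ideal.Quotient.mk (Ideal.span {(X : Polynomial K) ^ 2}) p)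
        (Ideal.Quotient.mk (Ideal.span {(X : Polynomial K) ^ 2}) q) =
      c • (Ideal.Quotient.mk (Ideal.span {(X : Polynomial K) ^ 2}) X *
        (Ideal.Quotient.mk (Ideal.span {(X : Polynomial K) ^ 2}) p *
           Ideal.Quotient.mk (Ideal.span {(X : Polynomial K) ^ 2}) (derivative q) -
         Ideal.Quotient.mk (Ideal.span {(X : Polynomial K) ^ 2}) q *
           Ideal.Quotient.mk (Ideal.span {(X : Polynomial K) ^ 2}) (derivative p))) := by
  set ε := Ideal.Quotient.mk (Ideal.span {(X : K[X]) ^ 2}) X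
  have hε : L 1 ε * ε = 0 := by
    rw [hanti, neg_mul (L ε 1), bracket_mul_self_eq_zero h2 hstar mk_X_mul_self, neg_zero]
  obtain ⟨c, hc⟩ := exists_eq_smul_mk_X_of_mul_mk_X_eq_zero hε
  refine ⟨c, fun p q => ?_⟩
  rw [mk_X_mul_wronskian, mk_eq_coeff_zero_smul_add_coeff_one_smul p,
    mk_eq_coeff_zero_smul_add_coeff_one_smul q,
    LinearMap.apply_add_smul_add_smul_of_antisymm h2 hanti, hc, smul_comm]
end

section
/- Let K be a field of characteristic ≠ 2. The space of symmetric brackets on K[x]/(x²) satisfying identity (★) is four-dimensional, with basis consisting of the brackets φ₁(f,g) = x̄·f'·g', φ₂(f,g) = x̄·(fg)', φ₃(f,g) = fg − x̄·(fg)', φ₄(f,g) = x̄·fg, where f ↦ f' is induced by formal differentiation and x̄ is the class of x. That is, every symmetric bracket on K[x]/(x²) satisfying (★) is a unique K-linear combination of φ₁, φ₂, φ₃, φ₄. -/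
/-! Write `ε = x̄`, so that `1, ε` is a basis of `K[x]/(x²)` and `ε² = 0`. Identity (★) with
`a = b = ε` gives `2 ε [ε, c] = 0`, hence `[ε, c] ∈ K ε`; with symmetry, the bracket is then
determined by `[1, 1] = s + t ε`, `[1, ε] = u ε`, `[ε, ε] = v ε`. In the coordinates
`f = f₀ + f₁ ε` the combination `v φ₁ + u φ₂ + s φ₃ + t φ₄` takes the same values, and evaluating
at `(1, 1)`, `(1, x)`, `(x, x)` recovers its coefficients. -/

open Polynomial

theorem Polynomial.coeff_one_mul {R : Type*} [Semiring R] (p q : R[X]) :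
    (p * q).coeff 1 = p.coeff 0 * q.coeff 1 + p.coeff 1 * q.coeff 0 := by
  rw [coeff_mul, Finset.Nat.sum_antidiagonal_eq_sum_range_succ_mk]
  simp [Finset.sum_range_succ]

theorem bracket_mul_eq_zero_of_mul_self_eq_zero {K A : Type*} [Field K] [CommRing A] [Algebra K A]
    (h2 : (2 : K) ≠ 0) (L : A →ₗ[K] A →ₗ[K] A)
    (hstar : ∀ a b c, L (a * b) c = L a c * b + L b c * a - L 1 c * (a * b))
    {ε : A} (hε : ε * ε = 0) (c : A) : L ε c * ε = 0 := by
  have h := hstar ε ε c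
  rw [hε, map_zero, LinearMap.zero_apply, mul_zero, sub_zero, ← two_smul K] at h
  exact (smul_eq_zero.mp h.symm).resolve_left h2

namespace DualNumberQuotient

variable {K : Type*} [Field K]

local notation "𝔸" => K[X] ⧸ Ideal.span {(X : K[X]) ^ 2}
local notation "mkq" => Ideal.Quotient.mk (Ideal.span {(X : K[X]) ^ 2})
local notation "ε" => Ideal.Quotient.mk (Ideal.span {(X : K[X]) ^ 2}) X

theorem eps_mul_eps : ε * ε = 0 := by
  rw [← map_mul, ← sq, Ideal.Quotient.eq_zero_iff_mem]
  exact Ideal.subset_span rfl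

theorem mk_C (a : K) : mkq (C a) = a • 1 := by
  rw [← algebraMap_eq, Ideal.Quotient.mk_algebraMap, Algebra.algebraMap_eq_smul_one]

theorem mk_C_add_C_mul_X (a b : K) : mkq (C a + C b * X) = a • 1 + b • ε := by
  rw [map_add, map_mul, mk_C, mk_C, smul_mul_assoc, one_mul]

theorem mk_eq_coeff_smul (p : K[X]) : mkq p = p.coeff 0 • 1 + p.coeff 1 • ε := by
  have hdvd : (X : K[X]) ^ 2 ∣ p - (C (p.coeff 0) + C (p.coeff 1) * X) := by
    rw [X_pow_dvd_iff]
    intro d hd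
    interval_cases d <;> simp
  rw [← mk_C_add_C_mul_X, ← sub_eq_zero, ← map_sub]
  exact Ideal.Quotient.eq_zero_iff_mem.2 (Ideal.mem_span_singleton.2 hdvd)

theorem linearIndependent_one_eps : LinearIndependent K ![(1 : 𝔸), ε] := by
  refine LinearIndependent.pair_iff.2 fun a b h => ?_
  have hmem : (X : K[X]) ^ 2 ∣ C a + C b * X := by
    rw [← Ideal.mem_span_singleton, ← Ideal.Quotient.eq_zero_iff_mem, ← h, mk_C_add_C_mul_X]
  rw [X_pow_dvd_iff] at hmem
  simpa using And.intro (hmem 0 (by norm_num)) (hmem 1 (by norm_num))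

theorem eps_mul_mk (p : K[X]) : ε * mkq p = p.coeff 0 • ε := by
  rw [mk_eq_coeff_smul p, mul_add, mul_smul_comm, mul_smul_comm, mul_one, eps_mul_eps,
    smul_zero, add_zero]

theorem exists_eq_smul_eps_of_mul_eps_eq_zero {z : 𝔸}
    (hz : z * ε = 0) : ∃ u : K, z = u • ε := by
  obtain ⟨p, rfl⟩ := Ideal.Quotient.mk_surjective z
  refine ⟨p.coeff 1, ?_⟩
  rw [mul_comm, eps_mul_mk] at hz
  have hε : ε ≠ 0 := by simpa using linearIndependent_one_eps.ne_zero (1 : Fin 2)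
  rw [mk_eq_coeff_smul p, (smul_eq_zero.mp hz).resolve_right hε, zero_smul, zero_add]

theorem bracket_mk_mk (L : 𝔸 →ₗ[K] 𝔸 →ₗ[K] 𝔸) (p q : K[X]) :
    L (mkq p) (mkq q) = (p.coeff 0 * q.coeff 0) • L 1 1 + (p.coeff 0 * q.coeff 1) • L 1 ε +
      (p.coeff 1 * q.coeff 0) • L ε 1 + (p.coeff 1 * q.coeff 1) • L ε ε := by
  rw [mk_eq_coeff_smul p, mk_eq_coeff_smul q]
  simp only [map_add, map_smul, LinearMap.add_apply, LinearMap.smul_apply]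
  module

theorem exists_bracket_mk_mk_eq (h2 : (2 : K) ≠ 0)
    (L : 𝔸 →ₗ[K] 𝔸 →ₗ[K] 𝔸) (hsymm : ∀ a b, L a b = L b a)
    (hstar : ∀ a b c, L (a * b) c = L a c * b + L b c * a - L 1 c * (a * b)) :
    ∃ s t u v : K, ∀ p q : K[X], L (mkq p) (mkq q) =
      (s * (p.coeff 0 * q.coeff 0)) • 1 + (t * (p.coeff 0 * q.coeff 0) +
        u * (p.coeff 0 * q.coeff 1 + p.coeff 1 * q.coeff 0) + v * (p.coeff 1 * q.coeff 1)) • ε := by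
  have hεL (c) : ∃ u : K, L ε c = u • ε := exists_eq_smul_eps_of_mul_eps_eq_zero <|
    bracket_mul_eq_zero_of_mul_self_eq_zero h2 L hstar eps_mul_eps c
  obtain ⟨p₁, hp₁⟩ := Ideal.Quotient.mk_surjective (L 1 1)
  obtain ⟨u, hε1⟩ := hεL 1
  obtain ⟨v, hεε⟩ := hεL ε
  refine ⟨p₁.coeff 0, p₁.coeff 1, u, v, fun p q => ?_⟩
  rw [bracket_mk_mk, hsymm 1 ε, hε1, hεε, ← hp₁, mk_eq_coeff_smul p₁]
  module

theorem phi_combination_eq (c₁ c₂ c₃ c₄ : K) (p q : K[X]) :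
    c₁ • (ε * mkq (derivative p) * mkq (derivative q)) + c₂ • (ε * mkq (derivative (p * q))) +
      c₃ • (mkq (p * q) - ε * mkq (derivative (p * q))) + c₄ • (ε * mkq (p * q)) =
    (c₃ * (p.coeff 0 * q.coeff 0)) • 1 + (c₄ * (p.coeff 0 * q.coeff 0) +
        c₂ * (p.coeff 0 * q.coeff 1 + p.coeff 1 * q.coeff 0) + c₁ * (p.coeff 1 * q.coeff 1)) • ε := by
  rw [eps_mul_mk, smul_mul_assoc, eps_mul_mk, eps_mul_mk, eps_mul_mk, mk_eq_coeff_smul (p * q)]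
  simp only [coeff_derivative, zero_add, mul_coeff_zero, coeff_one_mul, smul_smul]
  module

end DualNumberQuotient

open DualNumberQuotient in
/-- every symmetric bracket on `K[x]/(x²)` satisfying identity (★) is a
unique `K`-linear combination of `φ₁(f,g) = x̄f'g'`, `φ₂(f,g) = x̄(fg)'`,
`φ₃(f,g) = fg − x̄(fg)'`, `φ₄(f,g) = x̄fg`. -/
theorem stmt_7 (K : Type*) [Field K] (h2 : (2 : K) ≠ 0)
    (L : (Polynomial K ⧸ Ideal.span {(X : Polynomial K) ^ 2}) →ₗ[K]
         (Polynomial K ⧸ Ideal.span {(X : Polynomial K) ^ 2}) →ₗ[K]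
         (Polynomial K ⧸ Ideal.span {(X : Polynomial K) ^ 2}))
    (hsymm : ∀ a b, L a b = L b a)
    (hstar : ∀ a b c, L (a * b) c = L a c * b + L b c * a - L 1 c * (a * b)) :
    ∃! c : K × K × K × K, ∀ p q : Polynomial K,
      L (Ideal.Quotient.mk (Ideal.span {(X : Polynomial K) ^ 2}) p)
        (Ideal.Quotient.mk (Ideal.span {(X : Polynomial K) ^ 2}) q) =
      c.1 • (Ideal.Quotient.mk (Ideal.span {(X : Polynomial K) ^ 2}) X *
               Ideal.Quotient.mk (Ideal.span {(X : Polynomial K) ^ 2}) (derivative p) *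
               Ideal.Quotient.mk (Ideal.span {(X : Polynomial K) ^ 2}) (derivative q)) +
      c.2.1 • (Ideal.Quotient.mk (Ideal.span {(X : Polynomial K) ^ 2}) X *
               Ideal.Quotient.mk (Ideal.span {(X : Polynomial K) ^ 2}) (derivative (p * q))) +
      c.2.2.1 • (Ideal.Quotient.mk (Ideal.span {(X : Polynomial K) ^ 2}) (p * q) -
               Ideal.Quotient.mk (Ideal.span {(X : Polynomial K) ^ 2}) X *
               Ideal.Quotient.mk (Ideal.span {(X : Polynomial K) ^ 2}) (derivative (p * q))) +
      c.2.2.2 • (Ideal.Quotient.mk (Ideal.span {(X : Polynomial K) ^ 2}) X *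
               Ideal.Quotient.mk (Ideal.span {(X : Polynomial K) ^ 2}) (p * q)) := by
  obtain ⟨s, t, u, v, hL⟩ := exists_bracket_mk_mk_eq h2 L hsymm hstar
  refine ⟨(v, u, s, t), fun p q => by rw [hL, phi_combination_eq], ?_⟩
  rintro ⟨c₁, c₂, c₃, c₄⟩ hc
  simp only [hL, phi_combination_eq] at hc
  have h11 := linearIndependent_one_eps.eq_of_pair (hc 1 1)
  have h1X := linearIndependent_one_eps.eq_of_pair (hc 1 X)
  have hXX := linearIndependent_one_eps.eq_of_pair (hc X X)
  simp only [coeff_one, ↓reduceIte, mul_one, one_ne_zero, mul_zero, add_zero, coeff_X_zero,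
    coeff_X_one, zero_add, true_and] at h11 h1X hXX
  rw [h11.1, h11.2, h1X, hXX]
end

section
/- Let K be a field of characteristic ≠ 2, let A = K[x,y]/(x², y²), and let [·,·]_A be the Poisson bracket on A determined by [x̄,ȳ]_A = x̄ȳ (extended to all of A by bilinearity, anticommutativity, [1,A]_A = 0, and the Leibniz rule; explicitly, on the basis 1, x̄, ȳ, x̄ȳ the only nonzero basis brackets are [x̄,ȳ]_A = x̄ȳ = −[ȳ,x̄]_A). Then there is no derivation D of A such that D([a,b]_A) − [D(a),b]_A + [D(b),a]_A = [a,b]_A for all a,b ∈ A. -/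
/-! Write `x, y` for `x̄, ȳ`. On the basis `1, x, y, xy` one checks that `y a - [a, y] ∈ K y`
and `x a + [a, x] ∈ K x` for every `a`. Since `D (xy) = x D(y) + y D(x)`, the left-hand side of
the identity at `(a, b) = (x, y)` is `(y D(x) - [D(x), y]) + (x D(y) + [D(y), x]) ∈ K x + K y`,
whereas `[x, y] = xy` is not in `K x + K y`: multiplying `c x + d y = xy` by `x` and by `y`
forces `c = d = 0`, and `xy ≠ 0`. -/

open MvPolynomial

set_option synthInstance.maxHeartbeats 800000
set_option maxHeartbeats 800000

/-- The algebra `K[x,y]/(x²,y²)`. -/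
noncomputable abbrev DblTrunc (K : Type*) [Field K] :=
  MvPolynomial (Fin 2) K ⧸
    Ideal.span {(X 0 : MvPolynomial (Fin 2) K) ^ 2, (X 1 : MvPolynomial (Fin 2) K) ^ 2}

/-- The quotient map `K[x,y] → K[x,y]/(x²,y²)`. -/
noncomputable abbrev dmk (K : Type*) [Field K] : MvPolynomial (Fin 2) K →+* DblTrunc K :=
  Ideal.Quotient.mk
    (Ideal.span {(X 0 : MvPolynomial (Fin 2) K) ^ 2, (X 1 : MvPolynomial (Fin 2) K) ^ 2})

namespace DblTrunc

variable {K : Type*} [Field K]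

theorem dmk_X_mul_self (i : Fin 2) : dmk K (X i) * dmk K (X i) = 0 := by
  rw [← map_mul, ← sq, Ideal.Quotient.eq_zero_iff_mem]
  exact Ideal.subset_span (by fin_cases i <;> simp)

theorem dmk_X0_mul_X1_ne_zero : dmk K (X 0) * dmk K (X 1) ≠ 0 := by
  have hspan : ({X 0 ^ 2, X 1 ^ 2} : Set (MvPolynomial (Fin 2) K)) =
      (fun s => monomial s 1) '' {Finsupp.single 0 2, Finsupp.single 1 2} := by
    simp [Set.image_pair, X_pow_eq_monomial]
  classical
  rw [← map_mul, Ne, Ideal.Quotient.eq_zero_iff_mem, hspan, mem_ideal_span_monomial_image,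
    X, X, monomial_mul, one_mul, support_monomial, if_neg one_ne_zero]
  simp [Finsupp.le_def, Fin.forall_fin_two]

theorem smul_X0_add_smul_X1_ne (c d : K) :
    c • dmk K (X 0) + d • dmk K (X 1) ≠ dmk K (X 0) * dmk K (X 1) := by
  intro h
  have hd := congrArg (dmk K (X 0) * ·) h
  have hc := congrArg (· * dmk K (X 1)) h
  simp only [mul_add, add_mul, mul_smul_comm, smul_mul_assoc, ← mul_assoc,
    mul_assoc _ _ (dmk K (X 1)), dmk_X_mul_self, smul_zero, zero_mul, mul_zero, zero_add, add_zero,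
    smul_eq_zero, dmk_X0_mul_X1_ne_zero, or_false] at hc hd
  rw [hc, hd, zero_smul, zero_smul, add_zero] at h
  exact dmk_X0_mul_X1_ne_zero h.symm

variable (K) in
noncomputable def monomials : Fin 4 → DblTrunc K :=
  ![1, dmk K (X 0), dmk K (X 1), dmk K (X 0) * dmk K (X 1)]

theorem exists_eq_sum_monomials (a : DblTrunc K) :
    ∃ c : Fin 4 → K, a = ∑ i, c i • monomials K i := by
  obtain ⟨p, rfl⟩ := Ideal.Quotient.mk_surjective a
  induction p using MvPolynomial.induction_on with
  | C r =>
    refine ⟨![r, 0, 0, 0], ?_⟩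
    rw [← algebraMap_eq, Ideal.Quotient.mk_algebraMap, Algebra.algebraMap_eq_smul_one]
    simp [Fin.sum_univ_four, monomials]
  | add p q hp hq =>
    obtain ⟨c, hc⟩ := hp
    obtain ⟨d, hd⟩ := hq
    refine ⟨c + d, ?_⟩
    simp only [map_add, hc, hd, Pi.add_apply, add_smul, Finset.sum_add_distrib]
  | mul_X p i hp =>
    obtain ⟨c, hc⟩ := hp
    rw [map_mul, hc]
    fin_cases i
    · refine ⟨![0, c 0, 0, c 2], ?_⟩
      simp only [Fin.zero_eta, monomials, Fin.sum_univ_four, Matrix.cons_val, add_mul,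
        smul_mul_assoc, one_mul, mul_right_comm _ (dmk K (X 1)),
        mul_comm (dmk K (X 1)) (dmk K (X 0)), dmk_X_mul_self, zero_mul, smul_zero, add_zero,
        zero_smul]
      module
    · refine ⟨![0, 0, c 0, c 1], ?_⟩
      simp only [Fin.mk_one, monomials, Fin.sum_univ_four, Matrix.cons_val, add_mul,
        smul_mul_assoc, one_mul, mul_assoc, dmk_X_mul_self, mul_zero, smul_zero, add_zero,
        zero_smul]
      module

def IsXYBracket (P : DblTrunc K →ₗ[K] DblTrunc K →ₗ[K] DblTrunc K) : Prop :=
  ∀ i j : Fin 4, P (monomials K i) (monomials K j) =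
    if i = 1 ∧ j = 2 then dmk K (X 0) * dmk K (X 1)
    else if i = 2 ∧ j = 1 then -(dmk K (X 0) * dmk K (X 1))
    else 0

namespace IsXYBracket

variable {P : DblTrunc K →ₗ[K] DblTrunc K →ₗ[K] DblTrunc K} (hP : IsXYBracket P)
include hP

theorem exists_X1_mul_sub_eq_smul (a : DblTrunc K) :
    ∃ c : K, dmk K (X 1) * a - P a (dmk K (X 1)) = c • dmk K (X 1) := by
  obtain ⟨c, rfl⟩ := exists_eq_sum_monomials a
  refine ⟨c 0, ?_⟩
  change monomials K 2 * _ - P _ (monomials K 2) = c 0 • monomials K 2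
  simp only [map_sum, map_smul, LinearMap.sum_apply, LinearMap.smul_apply, (hP · 2),
    Finset.mul_sum, mul_smul_comm]
  simp [Fin.sum_univ_four, monomials, mul_comm (dmk K (X 1)) (dmk K (X 0)),
    mul_left_comm (dmk K (X 1)) (dmk K (X 0)), dmk_X_mul_self]

theorem exists_X0_mul_add_eq_smul (a : DblTrunc K) :
    ∃ c : K, dmk K (X 0) * a + P a (dmk K (X 0)) = c • dmk K (X 0) := by
  obtain ⟨c, rfl⟩ := exists_eq_sum_monomials a
  refine ⟨c 0, ?_⟩
  change monomials K 1 * _ + P _ (monomials K 1) = c 0 • monomials K 1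
  simp only [map_sum, map_smul, LinearMap.sum_apply, LinearMap.smul_apply, (hP · 1),
    Finset.mul_sum, mul_smul_comm]
  simp [Fin.sum_univ_four, monomials, ← mul_assoc, dmk_X_mul_self]

end IsXYBracket

end DblTrunc

theorem stmt_12_general (K : Type*) [Field K]
    (P : DblTrunc K →ₗ[K] DblTrunc K →ₗ[K] DblTrunc K)
    (hbasis : ∀ i j : Fin 4,
      P (![1, dmk K (X 0), dmk K (X 1), dmk K (X 0) * dmk K (X 1)] i)
        (![1, dmk K (X 0), dmk K (X 1), dmk K (X 0) * dmk K (X 1)] j) =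
      if i = 1 ∧ j = 2 then dmk K (X 0) * dmk K (X 1)
      else if i = 2 ∧ j = 1 then -(dmk K (X 0) * dmk K (X 1))
      else 0) :
    ¬ ∃ D : Derivation K (DblTrunc K) (DblTrunc K),
        ∀ a b : DblTrunc K, D (P a b) - P (D a) b + P (D b) a = P a b := by
  rintro ⟨D, hD⟩
  have hP : DblTrunc.IsXYBracket P := hbasis
  have hxy : P (dmk K (X 0)) (dmk K (X 1)) = dmk K (X 0) * dmk K (X 1) := by
    simpa using hbasis 1 2
  obtain ⟨c, hc⟩ := hP.exists_X1_mul_sub_eq_smul (D (dmk K (X 0)))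
  obtain ⟨d, hd⟩ := hP.exists_X0_mul_add_eq_smul (D (dmk K (X 1)))
  have key := hD (dmk K (X 0)) (dmk K (X 1))
  rw [hxy, D.leibniz, smul_eq_mul, smul_eq_mul] at key
  apply DblTrunc.smul_X0_add_smul_X1_ne d c
  rw [← hc, ← hd]
  linear_combination key

/-- for the Poisson bracket on `K[x,y]/(x²,y²)` with `[x̄,ȳ] = x̄ȳ`
(and all other brackets of the basis elements `1, x̄, ȳ, x̄ȳ` zero), there is no
derivation `D` with `D([a,b]) − [D(a),b] + [D(b),a] = [a,b]` for all `a, b`. -/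
theorem stmt_12 (K : Type*) [Field K] (h2 : (2 : K) ≠ 0)
    (P : DblTrunc K →ₗ[K] DblTrunc K →ₗ[K] DblTrunc K)
    (hbasis : ∀ i j : Fin 4,
      P (![1, dmk K (X 0), dmk K (X 1), dmk K (X 0) * dmk K (X 1)] i)
        (![1, dmk K (X 0), dmk K (X 1), dmk K (X 0) * dmk K (X 1)] j) =
      if i = 1 ∧ j = 2 then dmk K (X 0) * dmk K (X 1)
      else if i = 2 ∧ j = 1 then -(dmk K (X 0) * dmk K (X 1))
      else 0) :
    ¬ ∃ D : Derivation K (DblTrunc K) (DblTrunc K),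
        ∀ a b : DblTrunc K, D (P a b) - P (D a) b + P (D b) a = P a b :=
  stmt_12_general K P hbasis
end

section
/- Let K be a field of characteristic ≠ 2 and n a natural number. Every anticommutative bracket [·,·] on the polynomial algebra K[x₁,…,xₙ] satisfying identity (★) is of the form [a,b] = Σ_{1≤i<j≤n} f_{ij}·(∂a/∂x_i·∂b/∂x_j − ∂b/∂x_i·∂a/∂x_j) + (Σ_{i=1}^n f_i·∂a/∂x_i)·b − (Σ_{i=1}^n f_i·∂b/∂x_i)·a for some polynomials f_{ij}, f_i ∈ K[x₁,…,xₙ]. -/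
/-!
For fixed `c`, identity (★) says exactly that `D_c a := [a,c] - [1,c] a` is a derivation.
Antisymmetry and `2 ≠ 0` give `[1,1] = 0`, so `φ := D_1 = [·,1]` is a derivation and
`φ = Σ fᵢ ∂ᵢ` with `fᵢ = [xᵢ,1]`. Then `B(a,b) := D_b a - b φ(a) = [a,b] - φ(a) b + φ(b) a`
is a derivation in `a` and antisymmetric, hence a derivation in each argument, so
`B(a,b) = Σᵢⱼ B(xᵢ,xⱼ) ∂ᵢa ∂ⱼb`; antisymmetry folds this into the sum over `i < j`
with `fᵢⱼ = B(xᵢ,xⱼ)`.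
-/

open MvPolynomial

theorem eq_zero_of_eq_neg {K M : Type*} [DivisionRing K] [AddCommGroup M] [Module K M]
    (h2 : (2 : K) ≠ 0) {m : M} (h : m = -m) : m = 0 := by
  refine (smul_eq_zero.mp ?_).resolve_left h2
  rw [two_smul]
  nth_rw 1 [h]
  exact neg_add_cancel m

theorem Finset.sum_sum_eq_sum_sum_ite_lt {ι M : Type*} [Fintype ι] [LinearOrder ι]
    [AddCommMonoid M] (F : ι → ι → M) (hdiag : ∀ i, F i i = 0) :
    ∑ i, ∑ j, F i j = ∑ i, ∑ j, if i < j then F i j + F j i else 0 := by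
  have hsplit : ∀ i j, F i j = (if i < j then F i j else 0) + (if j < i then F i j else 0) := by
    intro i j
    rcases lt_trichotomy i j with h | rfl | h
    · simp [h, h.not_gt]
    · simp [hdiag]
    · simp [h, h.not_gt]
  simp only [ite_add_zero, Finset.sum_add_distrib]
  conv_lhs => enter [2, i, 2, j]; rw [hsplit i j]
  simp only [Finset.sum_add_distrib]
  rw [Finset.sum_comm (f := fun i j => if j < i then F i j else 0)]

namespace MvPolynomial

variable {R σ : Type*} [Fintype σ]

theorem derivation_eq_sum_mul_pderiv [CommSemiring R]
    (D : Derivation R (MvPolynomial σ R) (MvPolynomial σ R)) (p : MvPolynomial σ R) :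
    D p = ∑ i, D (X i) * pderiv i p := by
  classical
  have hsum (q : MvPolynomial σ R) : (∑ i, D (X i) • pderiv i) q = ∑ i, D (X i) * pderiv i q := by
    rw [← Derivation.coeFnAddMonoidHom_apply, map_sum, Finset.sum_apply]
    rfl
  have hD : D = ∑ i, D (X i) • pderiv i := by
    refine derivation_ext fun j => ?_
    simp [hsum, pderiv_X, Pi.single_apply]
  rw [← hsum, ← hD]

theorem derivation_apply_eq_sum_sum_of_antisymm [CommRing R]
    (B : MvPolynomial σ R → Derivation R (MvPolynomial σ R) (MvPolynomial σ R))
    (hB : ∀ a b, B b a = -B a b) (a b : MvPolynomial σ R) :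
    B b a = ∑ i, ∑ j, B (X j) (X i) * (pderiv i a * pderiv j b) := by
  rw [derivation_eq_sum_mul_pderiv (B b) a]
  refine Finset.sum_congr rfl fun i _ => ?_
  rw [hB, derivation_eq_sum_mul_pderiv (B (X i)) b, neg_mul, Finset.sum_mul,
    ← Finset.sum_neg_distrib]
  refine Finset.sum_congr rfl fun j _ => ?_
  rw [hB (X j) (X i)]
  ring

end MvPolynomial

namespace Bracket

variable {K A : Type*} [CommRing K] [CommRing A] [Algebra K A] (L : A →ₗ[K] A →ₗ[K] A)
  (hstar : ∀ a b c, L (a * b) c = L a c * b + L b c * a - L 1 c * (a * b))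

def leftDerivation (c : A) : Derivation K A A :=
  Derivation.mk' (L.flip c - LinearMap.mulLeft K (L 1 c)) fun a b => by
    simp only [LinearMap.sub_apply, LinearMap.flip_apply, LinearMap.mulLeft_apply, hstar,
      smul_eq_mul]
    ring

theorem leftDerivation_apply (a c : A) : leftDerivation L hstar c a = L a c - L 1 c * a := rfl

def biderivation (b : A) : Derivation K A A :=
  leftDerivation L hstar b - b • leftDerivation L hstar 1

variable (hanti : ∀ a b, L a b = -L b a) (h11 : L 1 1 = 0)
include hanti h11

theorem biderivation_apply (a b : A) :
    biderivation L hstar b a = L a b - L a 1 * b + L b 1 * a := by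
  simp only [biderivation, Derivation.coe_sub, Derivation.coe_smul, Pi.sub_apply, Pi.smul_apply,
    leftDerivation_apply, h11, hanti 1 b, smul_eq_mul]
  ring

theorem biderivation_antisymm (a b : A) : biderivation L hstar b a = -biderivation L hstar a b := by
  rw [biderivation_apply L hstar hanti h11, biderivation_apply L hstar hanti h11, hanti a b]
  ring

end Bracket

/-- every anticommutative bracket on `K[x₁,…,xₙ]` satisfying identity (★)
is of the form
`[a,b] = Σ_{i<j} f_{ij}(∂ᵢa ∂ⱼb − ∂ᵢb ∂ⱼa) + (Σᵢ fᵢ ∂ᵢa)·b − (Σᵢ fᵢ ∂ᵢb)·a`. -/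
theorem stmt_14 (K : Type*) [Field K] (h2 : (2 : K) ≠ 0) (n : ℕ)
    (L : MvPolynomial (Fin n) K →ₗ[K] MvPolynomial (Fin n) K →ₗ[K] MvPolynomial (Fin n) K)
    (hanti : ∀ a b, L a b = - L b a)
    (hstar : ∀ a b c, L (a * b) c = L a c * b + L b c * a - L 1 c * (a * b)) :
    ∃ (fij : Fin n → Fin n → MvPolynomial (Fin n) K) (fi : Fin n → MvPolynomial (Fin n) K),
      ∀ a b : MvPolynomial (Fin n) K,
        L a b =
          (∑ i, ∑ j, if i < j then
              fij i j * (pderiv i a * pderiv j b - pderiv i b * pderiv j a) else 0) +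
          (∑ i, fi i * pderiv i a) * b - (∑ i, fi i * pderiv i b) * a := by
  have h11 : L 1 1 = 0 := eq_zero_of_eq_neg h2 (hanti 1 1)
  have hB := Bracket.biderivation_antisymm L hstar hanti h11
  have hφ (c : MvPolynomial (Fin n) K) : L c 1 = ∑ i, L (X i) 1 * pderiv i c := by
    simpa [Bracket.leftDerivation_apply, h11] using
      derivation_eq_sum_mul_pderiv (Bracket.leftDerivation L hstar 1) c
  refine ⟨fun i j => Bracket.biderivation L hstar (X j) (X i), fun i => L (X i) 1, fun a b => ?_⟩
  have hL : L a b = Bracket.biderivation L hstar b a + L a 1 * b - L b 1 * a := by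
    rw [Bracket.biderivation_apply L hstar hanti h11]
    ring
  have hdiag (i : Fin n) : Bracket.biderivation L hstar (X i) (X i) = 0 :=
    eq_zero_of_eq_neg h2 (hB (X i) (X i))
  rw [← hφ, ← hφ, hL, derivation_apply_eq_sum_sum_of_antisymm _ hB,
    Finset.sum_sum_eq_sum_sum_ite_lt _ fun i => by rw [hdiag, zero_mul]]
  congr 2
  refine Finset.sum_congr rfl fun i _ => Finset.sum_congr rfl fun j _ => ?_
  split_ifs
  · dsimp only
    rw [hB (X i) (X j)]
    ring
  · rfl
end

section
/- Let K be a field of characteristic p > 2 and n a natural number. Every anticommutative bracket [·,·] on the reduced polynomial algebra O = K[x₁,…,xₙ]/(x₁^p,…,xₙ^p) satisfying identity (★) is of the form [a,b] = Σ_{1≤i<j≤n} f_{ij}·(∂a/∂x_i·∂b/∂x_j − ∂b/∂x_i·∂a/∂x_j) + (Σ_{i=1}^n f_i·∂a/∂x_i)·b − (Σ_{i=1}^n f_i·∂b/∂x_i)·a for some elements f_{ij}, f_i ∈ O, where ∂/∂x_i denotes the partial derivative induced on the quotient (well-defined since ∂(x_j^p)/∂x_i = 0 in characteristic p). -/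
/-!
Put `f a = [a, 1]` and `{a, b} = [a, b] - f a * b + f b * a`. Since `2` is invertible,
anticommutativity makes the bracket alternating, and then (★) says exactly that `f` is a
derivation and `{·, ·}` an alternating biderivation. A derivation out of the polynomial algebra
is determined by its values on the variables, `D a = Σᵢ ∂ᵢa • D xᵢ`; hence
`{a, b} = Σᵢⱼ {xᵢ, xⱼ} ∂ᵢa ∂ⱼb` and `f a = Σᵢ f xᵢ ∂ᵢa`, and antisymmetry of `{xᵢ, xⱼ}` folds
the double sum to `i < j`.
-/

open MvPolynomial

namespace MvPolynomial

theorem derivation_eq_sum_pderiv_smul {σ K M : Type*} [Fintype σ] [CommRing K]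
    [AddCommMonoid M] [Module K M] [Module (MvPolynomial σ K) M]
    [IsScalarTower K (MvPolynomial σ K) M] (D : Derivation K (MvPolynomial σ K) M)
    (a : MvPolynomial σ K) : D a = ∑ i, pderiv i a • D (X i) := by
  classical
  set E : Derivation K (MvPolynomial σ K) M :=
    ∑ i, (LinearMap.toSpanSingleton _ M (D (X i))).compDer (pderiv i)
  have hE : ∀ a, E a = ∑ i, pderiv i a • D (X i) := fun a => by
    rw [← Derivation.coeFnAddMonoidHom_apply, map_sum, Finset.sum_apply]; rfl
  rw [← hE, show D = E from derivation_ext fun j => by simp [hE, pderiv_X, Pi.single_apply]]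

end MvPolynomial

theorem Finset.sum_sum_mul_eq_sum_lt_of_antisymm {ι R : Type*} [Fintype ι] [LinearOrder ι]
    [CommRing R] (c : ι → ι → R) (hc : ∀ i j, c j i = -c i j) (hc0 : ∀ i, c i i = 0)
    (u v : ι → R) :
    ∑ i, ∑ j, c i j * (u i * v j) =
      ∑ i, ∑ j, if i < j then c i j * (u i * v j - v i * u j) else 0 := by
  calc ∑ i, ∑ j, c i j * (u i * v j)
      = ∑ i, ∑ j, ((if i < j then c i j * (u i * v j) else 0) +
          if j < i then c i j * (u i * v j) else 0) := by
        refine Finset.sum_congr rfl fun i _ => Finset.sum_congr rfl fun j _ => ?_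
        rcases lt_trichotomy i j with h | rfl | h
        · simp [h, h.not_gt]
        · simp [hc0]
        · simp [h, h.not_gt]
    _ = ∑ i, ∑ j, ((if i < j then c i j * (u i * v j) else 0) +
          if i < j then c j i * (u j * v i) else 0) := by
        simp only [Finset.sum_add_distrib]
        rw [Finset.sum_comm (f := fun i j => if j < i then c i j * (u i * v j) else 0)]
    _ = _ := by
        refine Finset.sum_congr rfl fun i _ => Finset.sum_congr rfl fun j _ => ?_
        split_ifs
        · rw [hc i j]; ring
        · simp

section Bracket

variable {K R σ : Type*} [CommRing K] [CommRing R] [Algebra K R] [Fintype σ]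
  [Algebra (MvPolynomial σ K) R] [IsScalarTower K (MvPolynomial σ K) R]

local notation "φ" => algebraMap (MvPolynomial σ K) R

theorem LinearMap.apply_algebraMap_eq_sum_pderiv (D : R →ₗ[K] R)
    (hD : ∀ u v, D (u * v) = u * D v + v * D u) (a : MvPolynomial σ K) :
    D (φ a) = ∑ i, φ (pderiv i a) * D (φ (X i)) := by
  simpa [Algebra.smul_def] using derivation_eq_sum_pderiv_smul
    ((Derivation.mk' D fun u v => by simpa [smul_eq_mul] using hD u v).compAlgebraMap
      (MvPolynomial σ K)) a

theorem LinearMap.IsAlt.map_mul_right {B : R →ₗ[K] R →ₗ[K] R} (hB : B.IsAlt)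
    (hleft : ∀ u v w, B (u * v) w = u * B v w + v * B u w) (u v w : R) :
    B u (v * w) = v * B u w + w * B u v := by
  rw [← hB.neg, hleft, ← hB.neg w u, ← hB.neg v u]
  ring

def LinearMap.biderivationPart (L : R →ₗ[K] R →ₗ[K] R) : R →ₗ[K] R →ₗ[K] R :=
  L - (LinearMap.mul K R).comp (L.flip 1) + ((LinearMap.mul K R).comp (L.flip 1)).flip

theorem LinearMap.biderivationPart_apply (L : R →ₗ[K] R →ₗ[K] R) (u v : R) :
    L.biderivationPart u v = L u v - L u 1 * v + L v 1 * u := by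
  simp [biderivationPart]

theorem LinearMap.IsAlt.biderivationPart {L : R →ₗ[K] R →ₗ[K] R} (halt : L.IsAlt) :
    L.biderivationPart.IsAlt := fun u => by
  rw [LinearMap.biderivationPart_apply, halt.self_eq_zero]
  ring

variable {L : R →ₗ[K] R →ₗ[K] R} (halt : L.IsAlt)
  (hstar : ∀ a b c, L (a * b) c = L a c * b + L b c * a - L 1 c * (a * b))
include halt hstar

theorem apply_mul_one_of_star (u v : R) : L (u * v) 1 = u * L v 1 + v * L u 1 := by
  rw [hstar, halt.self_eq_zero]
  ring

theorem biderivationPart_mul_left_of_star (u v w : R) :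
    L.biderivationPart (u * v) w = u * L.biderivationPart v w + v * L.biderivationPart u w := by
  simp only [LinearMap.biderivationPart_apply]
  rw [hstar, apply_mul_one_of_star halt hstar, ← halt.neg w 1]
  ring

theorem biderivationPart_algebraMap_of_star (a b : MvPolynomial σ K) :
    L.biderivationPart (φ a) (φ b) =
      ∑ i, ∑ j, L.biderivationPart (φ (X i)) (φ (X j)) * (φ (pderiv i a) * φ (pderiv j b)) := by
  set B := L.biderivationPart
  have hleft := biderivationPart_mul_left_of_star halt hstar
  have hright := halt.biderivationPart.map_mul_right hleft
  calc B (φ a) (φ b)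
      = ∑ i, φ (pderiv i a) * B (φ (X i)) (φ b) :=
        (B.flip _).apply_algebraMap_eq_sum_pderiv (fun u v => hleft u v _) a
    _ = _ := by
        refine Finset.sum_congr rfl fun i _ => ?_
        rw [(B _).apply_algebraMap_eq_sum_pderiv (hright _) b, Finset.mul_sum]
        exact Finset.sum_congr rfl fun j _ => by ring

theorem apply_algebraMap_of_star [LinearOrder σ] (a b : MvPolynomial σ K) :
    L (φ a) (φ b) =
      (∑ i, ∑ j, if i < j then
          L.biderivationPart (φ (X i)) (φ (X j)) *
            (φ (pderiv i a) * φ (pderiv j b) - φ (pderiv i b) * φ (pderiv j a))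
        else 0) +
      (∑ i, L (φ (X i)) 1 * φ (pderiv i a)) * φ b -
      (∑ i, L (φ (X i)) 1 * φ (pderiv i b)) * φ a := by
  have hB := halt.biderivationPart
  have hL : ∀ c, L (φ c) 1 = ∑ i, L (φ (X i)) 1 * φ (pderiv i c) := fun c => by
    simpa only [LinearMap.flip_apply, mul_comm] using
      (L.flip 1).apply_algebraMap_eq_sum_pderiv (apply_mul_one_of_star halt hstar) c
  rw [← hL, ← hL, ← Finset.sum_sum_mul_eq_sum_lt_of_antisymm _ (fun i j => (hB.neg _ _).symm)
    (fun i => hB.self_eq_zero _), ← biderivationPart_algebraMap_of_star halt hstar,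
    LinearMap.biderivationPart_apply]
  ring

end Bracket

/-- over a field of characteristic `p > 2`, every anticommutative bracket
on the reduced polynomial algebra `O = K[x₁,…,xₙ]/(x₁^p,…,xₙ^p)` satisfying identity (★)
is of the form
`[a,b] = Σ_{i<j} f_{ij}(∂ᵢa ∂ⱼb − ∂ᵢb ∂ⱼa) + (Σᵢ fᵢ ∂ᵢa)·b − (Σᵢ fᵢ ∂ᵢb)·a`. -/
theorem stmt_15 (K : Type*) [Field K] (p : ℕ) [CharP K p] (hp : 2 < p) (n : ℕ)
    (L : (MvPolynomial (Fin n) K ⧸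
            Ideal.span (Set.range fun i : Fin n => (X i : MvPolynomial (Fin n) K) ^ p)) →ₗ[K]
         (MvPolynomial (Fin n) K ⧸
            Ideal.span (Set.range fun i : Fin n => (X i : MvPolynomial (Fin n) K) ^ p)) →ₗ[K]
         (MvPolynomial (Fin n) K ⧸
            Ideal.span (Set.range fun i : Fin n => (X i : MvPolynomial (Fin n) K) ^ p)))
    (hanti : ∀ a b, L a b = - L b a)
    (hstar : ∀ a b c, L (a * b) c = L a c * b + L b c * a - L 1 c * (a * b)) :
    ∃ (fij : Fin n → Fin n →
        MvPolynomial (Fin n) K ⧸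
          Ideal.span (Set.range fun i : Fin n => (X i : MvPolynomial (Fin n) K) ^ p))
      (fi : Fin n →
        MvPolynomial (Fin n) K ⧸
          Ideal.span (Set.range fun i : Fin n => (X i : MvPolynomial (Fin n) K) ^ p)),
      ∀ a b : MvPolynomial (Fin n) K,
        L (Ideal.Quotient.mk _ a) (Ideal.Quotient.mk _ b) =
          (∑ i, ∑ j, if i < j then
              fij i j *
                (Ideal.Quotient.mk _ (pderiv i a) * Ideal.Quotient.mk _ (pderiv j b) -
                 Ideal.Quotient.mk _ (pderiv i b) * Ideal.Quotient.mk _ (pderiv j a))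
            else 0) +
          (∑ i, fi i * Ideal.Quotient.mk _ (pderiv i a)) * Ideal.Quotient.mk _ b -
          (∑ i, fi i * Ideal.Quotient.mk _ (pderiv i b)) * Ideal.Quotient.mk _ a := by
  have h2 : (2 : K) ≠ 0 := Ring.two_ne_zero (by rw [ringChar.eq K p]; omega)
  have halt : L.IsAlt := fun x =>
    (smul_eq_zero.mp ((two_smul K (L x x)).trans
      (eq_neg_iff_add_eq_zero.mp (hanti x x)))).resolve_left h2
  refine ⟨fun i j => L.biderivationPart (Ideal.Quotient.mk _ (X i)) (Ideal.Quotient.mk _ (X j)),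
    fun i => L (Ideal.Quotient.mk _ (X i)) 1, fun a b => ?_⟩
  simpa only [Ideal.Quotient.algebraMap_eq] using apply_algebraMap_of_star halt hstar a b
end

section
/- Let K be a field of characteristic ≠ 2, and let A and B be commutative associative unital K-algebras equipped with brackets [·,·]_A and [·,·]_B, each satisfying the contact identity [ab,c] = [a,c]b + [b,c]a + [c,1]ab on A and on B respectively. Then the bracket on A ⊗ B defined by [a⊗b, a'⊗b'] = [a,a']_A ⊗ bb' + aa' ⊗ [b,b']_B also satisfies the contact identity [uv,w] = [u,w]v + [v,w]u + [w,1]uv for all u,v,w ∈ A ⊗ B. -/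
/-! Both sides of the contact identity are additive in each of `u`, `v`, `w`, so it suffices to
check it on pure tensors; there it follows by expanding both sides with the contact identities
of `A` and `B` and normalising. -/

open TensorProduct

section ContactIdentity

variable {K : Type*} [CommSemiring K]

def SatisfiesContactIdentity {R : Type*} [CommSemiring R] [Algebra K R]
    (L : R →ₗ[K] R →ₗ[K] R) : Prop :=
  ∀ a b c : R, L (a * b) c = L a c * b + L b c * a + L c 1 * (a * b)

variable {A B : Type*} [CommSemiring A] [Algebra K A] [CommSemiring B] [Algebra K B]

theorem SatisfiesContactIdentity.of_tmul {L : A ⊗[K] B →ₗ[K] A ⊗[K] B →ₗ[K] A ⊗[K] B}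
    (h : ∀ (a a' c : A) (b b' d : B),
      L ((a ⊗ₜ b) * (a' ⊗ₜ b')) (c ⊗ₜ d) =
        L (a ⊗ₜ b) (c ⊗ₜ d) * (a' ⊗ₜ b') + L (a' ⊗ₜ b') (c ⊗ₜ d) * (a ⊗ₜ b) +
          L (c ⊗ₜ d) 1 * ((a ⊗ₜ b) * (a' ⊗ₜ b'))) :
    SatisfiesContactIdentity L := by
  intro u v w
  induction u using TensorProduct.induction_on with
  | zero => simp
  | add x y hx hy =>
    simp only [add_mul, map_add, LinearMap.add_apply, mul_add, hx, hy]
    ring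
  | tmul a b =>
  induction v using TensorProduct.induction_on with
  | zero => simp
  | add x y hx hy =>
    simp only [mul_add, map_add, LinearMap.add_apply, add_mul, hx, hy]
    ring
  | tmul a' b' =>
  induction w using TensorProduct.induction_on with
  | zero => simp
  | add x y hx hy =>
    simp only [map_add, LinearMap.add_apply, add_mul, hx, hy]
    ring
  | tmul c d => exact h a a' c b b' d

theorem SatisfiesContactIdentity.tensorProduct {LA : A →ₗ[K] A →ₗ[K] A}
    {LB : B →ₗ[K] B →ₗ[K] B} (hA : SatisfiesContactIdentity LA)
    (hB : SatisfiesContactIdentity LB) {L : A ⊗[K] B →ₗ[K] A ⊗[K] B →ₗ[K] A ⊗[K] B}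
    (hL : ∀ (a a' : A) (b b' : B),
      L (a ⊗ₜ b) (a' ⊗ₜ b') = LA a a' ⊗ₜ (b * b') + (a * a') ⊗ₜ LB b b') :
    SatisfiesContactIdentity L := by
  refine of_tmul fun a a' c b b' d => ?_
  rw [Algebra.TensorProduct.tmul_mul_tmul, Algebra.TensorProduct.one_def, hL, hL, hL, hL, hA, hB]
  simp only [Algebra.TensorProduct.tmul_mul_tmul, add_tmul, tmul_add, add_mul, mul_one]
  ring_nf

end ContactIdentity

theorem stmt_18_general (K : Type*) [Field K]
    (A B : Type*) [CommRing A] [Algebra K A] [CommRing B] [Algebra K B]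
    (LA : A →ₗ[K] A →ₗ[K] A) (LB : B →ₗ[K] B →ₗ[K] B)
    (hA : ∀ a b c : A, LA (a * b) c = LA a c * b + LA b c * a + LA c 1 * (a * b))
    (hB : ∀ a b c : B, LB (a * b) c = LB a c * b + LB b c * a + LB c 1 * (a * b))
    (L : (A ⊗[K] B) →ₗ[K] (A ⊗[K] B) →ₗ[K] (A ⊗[K] B))
    (hL : ∀ (a a' : A) (b b' : B),
      L (a ⊗ₜ[K] b) (a' ⊗ₜ[K] b') =
        LA a a' ⊗ₜ[K] (b * b') + (a * a') ⊗ₜ[K] LB b b') :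
    ∀ u v w : A ⊗[K] B, L (u * v) w = L u w * v + L v w * u + L w 1 * (u * v) :=
  SatisfiesContactIdentity.tensorProduct hA hB hL

/-- if brackets on `A` and on `B` both satisfy the contact identity
`[ab,c] = [a,c]b + [b,c]a + [c,1]ab`, then the bracket
`[a⊗b, a'⊗b'] = [a,a']_A ⊗ bb' + aa' ⊗ [b,b']_B` on `A ⊗ B` also satisfies it. -/
theorem stmt_18 (K : Type*) [Field K] (h2 : (2 : K) ≠ 0)
    (A B : Type*) [CommRing A] [Algebra K A] [CommRing B] [Algebra K B]
    (LA : A →ₗ[K] A →ₗ[K] A) (LB : B →ₗ[K] B →ₗ[K] B)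
    (hA : ∀ a b c : A, LA (a * b) c = LA a c * b + LA b c * a + LA c 1 * (a * b))
    (hB : ∀ a b c : B, LB (a * b) c = LB a c * b + LB b c * a + LB c 1 * (a * b))
    (L : (A ⊗[K] B) →ₗ[K] (A ⊗[K] B) →ₗ[K] (A ⊗[K] B))
    (hL : ∀ (a a' : A) (b b' : B),
      L (a ⊗ₜ[K] b) (a' ⊗ₜ[K] b') =
        LA a a' ⊗ₜ[K] (b * b') + (a * a') ⊗ₜ[K] LB b b') :
    ∀ u v w : A ⊗[K] B, L (u * v) w = L u w * v + L v w * u + L w 1 * (u * v) :=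
  stmt_18_general K A B LA LB hA hB L hL
end
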